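/- arXiv:2407.05167 — 7 statements merged into one kernel-verified Lean document; each statement's English description precedes it below -/
import Mathlib

section
/- Let A be a commutative ring and f(u) = u^n + a_1 u^{n-1} + ... + a_n a monic polynomial over A. The splitting ring Split_A(f), defined as the quotient of A[ξ_1,...,ξ_n] by the relations identifying the coefficients of f(u) with those of (u-ξ_1)···(u-ξ_n), is a free A-module of rank n!. -/
/-!
Induction on `n`. Over `B = A[u]/(f)` the polynomial `f` acquires the root `ρ = u`, so
`f = (u - ρ) f₁` with `f₁` monic of degree `n - 1`. The universal property of splitting rings
(an `A`-algebra map `Split_A(f) → C` is a factorization of `f` into linear factors over `C`)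
identifies `Split_A(f)` with `Split_B(f₁)`, sending `ξ₁` to `ρ` and the other `ξᵢ` to the roots
of `f₁`. As `B` is free over `A` with basis `1, u, …, uⁿ⁻¹`, the tower `A → B → Split_B(f₁)` has
rank `n · (n - 1)! = n!`.
-/

open Polynomial

section

variable {A S : Type*} [CommRing A] [CommRing S]

noncomputable def splittingIdeal (n : ℕ) (f : A[X]) : Ideal (MvPolynomial (Fin n) A) :=
  Ideal.span { r | ∃ k : ℕ, r = (f.map (algebraMap A (MvPolynomial (Fin n) A))).coeff k -
    (∏ i : Fin n, (X - C (MvPolynomial.X i)) : (MvPolynomial (Fin n) A)[X]).coeff k }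

abbrev SplittingRing (n : ℕ) (f : A[X]) := MvPolynomial (Fin n) A ⧸ splittingIdeal n f

theorem splittingIdeal_le_ker_iff {n : ℕ} {f : A[X]} (φ : MvPolynomial (Fin n) A →+* S) :
    splittingIdeal n f ≤ RingHom.ker φ ↔
      f.map (φ.comp (algebraMap A _)) = ∏ i, (X - C (φ (MvPolynomial.X i))) := by
  have hprod : (∏ i : Fin n, (X - C (MvPolynomial.X i)) : (MvPolynomial (Fin n) A)[X]).map φ =
      ∏ i, (X - C (φ (MvPolynomial.X i))) := by
    simp [Polynomial.map_prod]
  rw [← Polynomial.map_map, ← hprod, splittingIdeal, Ideal.span_le, Polynomial.ext_iff]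
  simp only [Set.subset_def, Set.mem_ofPred_eq, forall_exists_index, forall_eq_apply_imp_iff,
    SetLike.mem_coe, RingHom.mem_ker, map_sub, sub_eq_zero, Polynomial.coeff_map]

namespace SplittingRing

section

variable {n : ℕ} {f : A[X]}

noncomputable def root (i : Fin n) : SplittingRing n f :=
  Ideal.Quotient.mk _ (MvPolynomial.X i)

theorem map_eq_prod_X_sub_C_root :
    f.map (algebraMap A (SplittingRing n f)) = ∏ i, (X - C (root i)) :=
  (splittingIdeal_le_ker_iff (Ideal.Quotient.mk _)).1 (Ideal.mk_ker.ge)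

noncomputable def lift (σ : A →+* S) (x : Fin n → S) (hx : f.map σ = ∏ i, (X - C (x i))) :
    SplittingRing n f →+* S :=
  Ideal.Quotient.lift _ (MvPolynomial.eval₂Hom σ x) <| (splittingIdeal_le_ker_iff _).2 <| by
    simpa [MvPolynomial.algebraMap_eq] using hx

@[simp]
theorem lift_root (σ : A →+* S) (x : Fin n → S) (hx : f.map σ = ∏ i, (X - C (x i)))
    (i : Fin n) : lift σ x hx (root i) = x i :=
  MvPolynomial.eval₂_X _ _ _

@[simp]
theorem lift_algebraMap (σ : A →+* S) (x : Fin n → S) (hx : f.map σ = ∏ i, (X - C (x i)))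
    (a : A) : lift σ x hx (algebraMap A _ a) = σ a :=
  MvPolynomial.eval₂_C _ _ _

theorem ringHom_ext {φ ψ : SplittingRing n f →+* S}
    (hA : φ.comp (algebraMap A _) = ψ.comp (algebraMap A _))
    (hroot : ∀ i, φ (root i) = ψ (root i)) : φ = ψ :=
  Ideal.Quotient.ringHom_ext <| MvPolynomial.ringHom_ext (RingHom.congr_fun hA) hroot

end

section Succ

variable (f : A[X])

noncomputable def cofactor : (AdjoinRoot f)[X] :=
  f.map (algebraMap A (AdjoinRoot f)) /ₘ (X - C (AdjoinRoot.root f))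

theorem X_sub_C_root_mul_cofactor :
    (X - C (AdjoinRoot.root f)) * cofactor f = f.map (algebraMap A (AdjoinRoot f)) :=
  mul_divByMonic_eq_iff_isRoot.2 <| by simp [IsRoot, eval_map]

variable {f}

theorem monic_cofactor (hf : f.Monic) : (cofactor f).Monic :=
  .of_mul_monic_left (monic_X_sub_C _) (X_sub_C_root_mul_cofactor f ▸ hf.map _)

theorem natDegree_cofactor {n : ℕ} (hf : f.Monic) (hdeg : f.natDegree = n + 1) :
    (cofactor f).natDegree = n := by
  have : Nontrivial (AdjoinRoot f) := Ideal.Quotient.nontrivial_iff.2 <| by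
    rw [Ne, Ideal.span_singleton_eq_top, hf.isUnit_iff]
    rintro rfl
    simp at hdeg
  rw [cofactor, natDegree_divByMonic _ (monic_X_sub_C _), hf.natDegree_map, hdeg,
    natDegree_X_sub_C, Nat.add_sub_cancel]

variable (n : ℕ) (f)

noncomputable def adjoinRootLift : AdjoinRoot f →+* SplittingRing (n + 1) f :=
  AdjoinRoot.lift (algebraMap A _) (root 0) <| by
    rw [← eval_map, map_eq_prod_X_sub_C_root, eval_prod]
    exact Finset.prod_eq_zero (Finset.mem_univ 0) (by simp)

theorem map_cofactor_adjoinRootLift :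
    (cofactor f).map (adjoinRootLift f n) = ∏ j : Fin n, (X - C (root j.succ)) := by
  refine (monic_X_sub_C (root (0 : Fin (n + 1)) : SplittingRing (n + 1) f)).isRegular.left ?_
  calc (X - C (root 0)) * (cofactor f).map (adjoinRootLift f n)
      = ((X - C (AdjoinRoot.root f)) * cofactor f).map (adjoinRootLift f n) := by
        simp [adjoinRootLift]
    _ = f.map (algebraMap A (SplittingRing (n + 1) f)) := by
        rw [X_sub_C_root_mul_cofactor, Polynomial.map_map, adjoinRootLift,
          AdjoinRoot.algebraMap_eq, AdjoinRoot.lift_comp_of]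
    _ = (X - C (root 0)) * ∏ j : Fin n, (X - C (root j.succ)) := by
        rw [map_eq_prod_X_sub_C_root, Fin.prod_univ_succ]

noncomputable def toSucc : SplittingRing n (cofactor f) →+* SplittingRing (n + 1) f :=
  lift (adjoinRootLift f n) (fun j => root j.succ) (map_cofactor_adjoinRootLift f n)

noncomputable def ofSucc : SplittingRing (n + 1) f →+* SplittingRing n (cofactor f) :=
  lift (algebraMap A _) (Fin.cons (algebraMap _ _ (AdjoinRoot.root f)) root) <| by
    rw [Fin.prod_univ_succ, IsScalarTower.algebraMap_eq A (AdjoinRoot f), ← Polynomial.map_map,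
      ← X_sub_C_root_mul_cofactor, Polynomial.map_mul, map_eq_prod_X_sub_C_root]
    simp

theorem toSucc_comp_ofSucc : (toSucc f n).comp (ofSucc f n) = RingHom.id _ := by
  refine ringHom_ext (RingHom.ext fun a => ?_) fun i => ?_
  · simp [toSucc, ofSucc, adjoinRootLift, IsScalarTower.algebraMap_apply A (AdjoinRoot f)]
  · cases i using Fin.cases <;> simp [toSucc, ofSucc, adjoinRootLift]

theorem ofSucc_comp_toSucc : (ofSucc f n).comp (toSucc f n) = RingHom.id _ := by
  refine ringHom_ext (AdjoinRoot.ringHom_ext (RingHom.ext fun a => ?_) ?_) fun j => ?_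
  · simp [toSucc, ofSucc, adjoinRootLift, IsScalarTower.algebraMap_apply A (AdjoinRoot f)]
  · simp [toSucc, ofSucc, adjoinRootLift]
  · simp [toSucc, ofSucc]

noncomputable def succAlgEquiv : SplittingRing (n + 1) f ≃ₐ[A] SplittingRing n (cofactor f) :=
  AlgEquiv.ofRingEquiv (f := RingEquiv.ofRingHom (ofSucc f n) (toSucc f n)
    (ofSucc_comp_toSucc f n) (toSucc_comp_ofSucc f n))
    fun _ => by simp [ofSucc]

end Succ

noncomputable def zeroAlgEquiv : SplittingRing 0 (1 : A[X]) ≃ₐ[A] A :=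
  AlgEquiv.ofRingEquiv
    (f := RingEquiv.ofRingHom (lift (RingHom.id A) Fin.elim0 (by simp)) (algebraMap A _)
      (RingHom.ext fun _ => by simp)
      (ringHom_ext (RingHom.ext fun _ => by simp) fun i => i.elim0))
    fun _ => by simp

theorem nonempty_basis_fin_factorial (n : ℕ) {f : A[X]} (hf : f.Monic)
    (hdeg : f.natDegree = n) : Nonempty (Module.Basis (Fin n.factorial) A (SplittingRing n f)) := by
  induction n generalizing A with
  | zero =>
    obtain rfl : f = 1 := hf.natDegree_eq_zero.1 hdeg
    exact ⟨(Module.Basis.singleton (Fin 1) A).map zeroAlgEquiv.symm.toLinearEquiv⟩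
  | succ n ih =>
    obtain ⟨b⟩ := ih (monic_cofactor hf) (natDegree_cofactor hf hdeg)
    let bRoot : Module.Basis (Fin (n + 1)) A (AdjoinRoot f) :=
      (AdjoinRoot.powerBasis' hf).basis.reindex (finCongr hdeg)
    exact ⟨((bRoot.smulTower b).map (succAlgEquiv f n).symm.toLinearEquiv).reindex
      (finProdFinEquiv.trans (finCongr (Nat.factorial_succ n).symm))⟩

end SplittingRing

end

theorem splitting_ring_free_of_rank_factorial
    (A : Type*) [CommRing A] (n : ℕ) (f : Polynomial A)
    (hf : f.Monic) (hdeg : f.natDegree = n) :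
    let R := MvPolynomial (Fin n) A
    let g : Polynomial R := ∏ i : Fin n, (Polynomial.X - Polynomial.C (MvPolynomial.X i))
    let I : Ideal R := Ideal.span
      { r : R | ∃ k : ℕ, r = (f.map (algebraMap A R)).coeff k - g.coeff k }
    Nonempty (Module.Basis (Fin (Nat.factorial n)) A (R ⧸ I)) :=
  SplittingRing.nonempty_basis_fin_factorial n hf hdeg
end

section
/- Let A be a commutative Q-algebra, f a monic polynomial of degree n over A, and C = Fact^d_A(f) the d-factorization ring with universal factors g_1,...,g_r. Then there is a natural isomorphism of A-modules Split_A(f) ≅ Split_C(g_1) ⊗_C ··· ⊗_C Split_C(g_r). -/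
/-- The product `(u-ξ₁)⋯(u-ξ_k)` over the polynomial ring `B[ξ₁,…,ξ_k]`. -/
noncomputable def univSplitPoly (B : Type*) [CommRing B] (k : ℕ) :
    Polynomial (MvPolynomial (Fin k) B) :=
  ∏ i : Fin k, (Polynomial.X - Polynomial.C (MvPolynomial.X i))

/-- The splitting ring of a polynomial `p` over `B`, with `k` universal roots `ξ₁,…,ξ_k`:
the quotient of `B[ξ₁,…,ξ_k]` identifying the coefficients of `p(u)` with those of
`(u-ξ₁)⋯(u-ξ_k)`. -/
def SplitRing (B : Type*) [CommRing B] (k : ℕ) (p : Polynomial B) : Type _ :=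
  MvPolynomial (Fin k) B ⧸ (Ideal.span
    { x : MvPolynomial (Fin k) B | ∃ m : ℕ,
        x = (p.map (algebraMap B (MvPolynomial (Fin k) B))).coeff m -
          (univSplitPoly B k).coeff m })

noncomputable instance (B : Type*) [CommRing B] (k : ℕ) (p : Polynomial B) :
    CommRing (SplitRing B k p) :=
  inferInstanceAs (CommRing (_ ⧸ _))

noncomputable instance (B : Type*) [CommRing B] (k : ℕ) (p : Polynomial B) :
    Algebra B (SplitRing B k p) :=
  inferInstanceAs (Algebra B (_ ⧸ _))

/-- The generic monic polynomial `gᵢ = u^{dᵢ} + Σ_j b_{i,j} u^j` of degree `dᵢ`, over the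
polynomial ring `B[b_{i,j}]`. -/
noncomputable def genericFactor (B : Type*) [CommRing B] {r : ℕ} (d : Fin r → ℕ) (i : Fin r) :
    Polynomial (MvPolynomial ((i : Fin r) × Fin (d i)) B) :=
  Polynomial.X ^ (d i) +
    ∑ j : Fin (d i), Polynomial.C (MvPolynomial.X (Sigma.mk i j)) * Polynomial.X ^ (j : ℕ)

/-- The `d`-factorization ring of `p` over `B`: the quotient of the polynomial ring on
variables `b_{i,j}` (`1 ≤ i ≤ r`, `1 ≤ j ≤ dᵢ`) identifying the coefficients of `p` with
those of the product of the generic monic polynomials `gᵢ` of degree `dᵢ`. -/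
def FactRing (B : Type*) [CommRing B] {r : ℕ} (d : Fin r → ℕ) (p : Polynomial B) : Type _ :=
  MvPolynomial ((i : Fin r) × Fin (d i)) B ⧸ (Ideal.span
    { x : MvPolynomial ((i : Fin r) × Fin (d i)) B | ∃ m : ℕ,
        x = (p.map (algebraMap B (MvPolynomial ((i : Fin r) × Fin (d i)) B))).coeff m -
          (∏ i : Fin r, genericFactor B d i).coeff m })

noncomputable instance (B : Type*) [CommRing B] {r : ℕ} (d : Fin r → ℕ) (p : Polynomial B) :
    CommRing (FactRing B d p) :=
  inferInstanceAs (CommRing (_ ⧸ _))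

noncomputable instance (B : Type*) [CommRing B] {r : ℕ} (d : Fin r → ℕ) (p : Polynomial B) :
    Algebra B (FactRing B d p) :=
  inferInstanceAs (Algebra B (_ ⧸ _))

/-- The universal `i`-th monic factor `gᵢ` of `p`, viewed in the factorization ring. -/
noncomputable def FactRing.univFactor (B : Type*) [CommRing B] {r : ℕ} (d : Fin r → ℕ)
    (p : Polynomial B) (i : Fin r) : Polynomial (FactRing B d p) :=
  (genericFactor B d i).map (Ideal.Quotient.mk _)

/-!
Both sides corepresent the same functor on `A`-algebras. A map `Split_A(f) → R` is an ordered
`n`-tuple `x` of elements of `R` with `f = ∏ (u - x_v)`. Cutting the tuple into consecutive blocks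
of lengths `dᵢ` (through a bijection `Fin n ≃ Σ i, Fin dᵢ`) gives a factorization `f = ∏ gᵢ` with
`gᵢ = ∏_{v ∈ block i} (u - x_v)` monic of degree `dᵢ`, i.e. a map `C → R`, together with an ordering
of the roots of every `gᵢ`, i.e. `C`-algebra maps `Split_C(gᵢ) → R`, i.e. a map out of the tensor
product. Concretely, the two ring maps are built from the universal properties and are checked to
be mutually inverse on generators; they are compatible with the structure maps from `A`.
-/

open Polynomial
open scoped TensorProduct

namespace Polynomial

variable {S R : Type*} [CommRing S] [CommRing R]

theorem map_mk_span_coeff_sub_eq (P Q : S[X]) :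
    P.map (Ideal.Quotient.mk (Ideal.span {x | ∃ m, x = P.coeff m - Q.coeff m})) =
      Q.map (Ideal.Quotient.mk _) := by
  ext m
  rw [coeff_map, coeff_map, Ideal.Quotient.eq]
  exact Ideal.subset_span ⟨m, rfl⟩

theorem span_coeff_sub_le_ker {P Q : S[X]} (φ : S →+* R) (h : P.map φ = Q.map φ) :
    Ideal.span {x | ∃ m, x = P.coeff m - Q.coeff m} ≤ RingHom.ker φ := by
  rw [Ideal.span_le]
  rintro _ ⟨m, rfl⟩
  rw [SetLike.mem_coe, RingHom.mem_ker, map_sub, ← coeff_map, ← coeff_map, h, sub_self]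

theorem eq_X_pow_add_sum_of_natDegree_le {q : R[X]} {m : ℕ} (hdeg : q.natDegree ≤ m)
    (hlead : q.coeff m = 1) :
    q = X ^ m + ∑ j : Fin m, C (q.coeff j) * X ^ (j : ℕ) := by
  conv_lhs => rw [q.as_sum_range_C_mul_X_pow' (Nat.lt_succ_of_le hdeg)]
  rw [Finset.sum_range_succ, hlead, C_1, one_mul, add_comm,
    Fin.sum_univ_eq_sum_range (fun j => C (q.coeff j) * X ^ j)]

theorem natDegree_prod_X_sub_C_le {k : ℕ} (x : Fin k → R) :
    (∏ i, (X - C (x i))).natDegree ≤ k :=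
  (natDegree_prod_le _ _).trans <| by
    simpa using Finset.sum_le_card_nsmul Finset.univ _ 1 fun i _ => natDegree_X_sub_C_le (x i)

theorem coeff_prod_X_sub_C_self {k : ℕ} (x : Fin k → R) :
    (∏ i, (X - C (x i))).coeff k = 1 := by
  simpa using coeff_prod_of_natDegree_le (s := Finset.univ) (fun i => X - C (x i)) 1
    fun i _ => natDegree_X_sub_C_le (x i)

end Polynomial

noncomputable section

namespace SplitRing

variable {B R : Type*} [CommRing B] [CommRing R] {k : ℕ} (p : B[X])

def root (i : Fin k) : SplitRing B k p :=
  Ideal.Quotient.mk _ (MvPolynomial.X i)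

theorem map_algebraMap_eq_prod_X_sub_C_root :
    p.map (algebraMap B (SplitRing B k p)) = ∏ i, (X - C (root p i)) := by
  have h := map_mk_span_coeff_sub_eq (p.map (algebraMap B (MvPolynomial (Fin k) B)))
    (univSplitPoly B k)
  rw [map_map, univSplitPoly, Polynomial.map_prod] at h
  simp only [Polynomial.map_sub, map_X, map_C] at h
  exact h

variable {p}

def lift (φ : B →+* R) (x : Fin k → R) (hx : p.map φ = ∏ i, (X - C (x i))) :
    SplitRing B k p →+* R :=
  Ideal.Quotient.lift _ (MvPolynomial.eval₂Hom φ x) fun _ ha =>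
    span_coeff_sub_le_ker _ (by simp [map_map, univSplitPoly, Polynomial.map_prod, hx]) ha

section Lift

variable (φ : B →+* R) (x : Fin k → R) (hx : p.map φ = ∏ i, (X - C (x i)))

@[simp]
theorem lift_algebraMap (b : B) : lift φ x hx (algebraMap B _ b) = φ b :=
  MvPolynomial.eval₂Hom_C φ x b

@[simp]
theorem lift_root (i : Fin k) : lift φ x hx (root p i) = x i :=
  MvPolynomial.eval₂Hom_X' φ x i

end Lift

theorem ringHom_ext {ψ₁ ψ₂ : SplitRing B k p →+* R}
    (hB : ∀ b, ψ₁ (algebraMap B _ b) = ψ₂ (algebraMap B _ b))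
    (hroot : ∀ i, ψ₁ (root p i) = ψ₂ (root p i)) : ψ₁ = ψ₂ :=
  Ideal.Quotient.ringHom_ext (MvPolynomial.ringHom_ext hB hroot)

def liftAlgHom [Algebra B R] (x : Fin k → R)
    (hx : p.map (algebraMap B R) = ∏ i, (X - C (x i))) : SplitRing B k p →ₐ[B] R :=
  { lift (algebraMap B R) x hx with commutes' := lift_algebraMap _ x hx }

@[simp]
theorem liftAlgHom_root [Algebra B R] (x : Fin k → R)
    (hx : p.map (algebraMap B R) = ∏ i, (X - C (x i))) (i : Fin k) :
    liftAlgHom x hx (root p i) = x i :=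
  lift_root _ x hx i

end SplitRing

section GenericFactor

variable {B R : Type*} [CommRing B] [CommRing R] {r : ℕ} (d : Fin r → ℕ)

theorem coeff_genericFactor (i : Fin r) (j : Fin (d i)) :
    (genericFactor B d i).coeff j = MvPolynomial.X ⟨i, j⟩ := by
  rw [genericFactor, coeff_add, coeff_X_pow, if_neg j.isLt.ne, finsetSum_coeff,
    Finset.sum_eq_single j (fun j' _ hj' => by simp [coeff_X_pow, Fin.val_ne_of_ne hj'.symm])
      (by simp)]
  simp

theorem map_genericFactor_eval₂Hom_coeff (φ : B →+* R) {G : Fin r → R[X]}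
    (hdeg : ∀ i, (G i).natDegree ≤ d i) (hlead : ∀ i, (G i).coeff (d i) = 1) (i : Fin r) :
    (genericFactor B d i).map (MvPolynomial.eval₂Hom φ fun s => (G s.1).coeff s.2) = G i := by
  conv_rhs => rw [eq_X_pow_add_sum_of_natDegree_le (hdeg i) (hlead i)]
  simp [genericFactor, Polynomial.map_sum]

end GenericFactor

namespace FactRing

variable {B R : Type*} [CommRing B] [CommRing R] {r : ℕ} (d : Fin r → ℕ) (p : B[X])

theorem map_algebraMap_eq_prod_univFactor :
    p.map (algebraMap B (FactRing B d p)) = ∏ i, univFactor B d p i := by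
  have h := map_mk_span_coeff_sub_eq (p.map (algebraMap B (MvPolynomial _ B)))
    (∏ i, genericFactor B d i)
  rw [map_map, Polynomial.map_prod] at h
  exact h

theorem coeff_univFactor (i : Fin r) (j : Fin (d i)) :
    (univFactor B d p i).coeff j = Ideal.Quotient.mk _ (MvPolynomial.X ⟨i, j⟩) :=
  (coeff_map _ _).trans (congr_arg _ (coeff_genericFactor d i j))

variable {d p}

/-- `hdeg` and `hlead` say that `G i` is monic of degree `d i`, in a form that does not exclude
the zero ring. -/
def lift (φ : B →+* R) (G : Fin r → R[X]) (hdeg : ∀ i, (G i).natDegree ≤ d i)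
    (hlead : ∀ i, (G i).coeff (d i) = 1) (hp : p.map φ = ∏ i, G i) : FactRing B d p →+* R :=
  Ideal.Quotient.lift _ (MvPolynomial.eval₂Hom φ fun s => (G s.1).coeff s.2) fun _ ha =>
    span_coeff_sub_le_ker _ (by
      rw [map_map, Polynomial.map_prod, MvPolynomial.algebraMap_eq, MvPolynomial.eval₂Hom_comp_C,
        hp]
      exact Finset.prod_congr rfl fun i _ =>
        (map_genericFactor_eval₂Hom_coeff d φ hdeg hlead i).symm) ha

variable (φ : B →+* R) (G : Fin r → R[X]) (hdeg : ∀ i, (G i).natDegree ≤ d i)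
  (hlead : ∀ i, (G i).coeff (d i) = 1) (hp : p.map φ = ∏ i, G i)

@[simp]
theorem lift_algebraMap (b : B) : lift φ G hdeg hlead hp (algebraMap B _ b) = φ b :=
  MvPolynomial.eval₂Hom_C _ _ b

theorem map_univFactor_lift (i : Fin r) :
    (univFactor B d p i).map (lift φ G hdeg hlead hp) = G i :=
  (map_map (Ideal.Quotient.mk _) _ (genericFactor B d i)).trans
    (map_genericFactor_eval₂Hom_coeff d φ hdeg hlead i)

theorem ringHom_ext {ψ₁ ψ₂ : FactRing B d p →+* R}
    (hB : ∀ b, ψ₁ (algebraMap B _ b) = ψ₂ (algebraMap B _ b))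
    (hfac : ∀ i, (univFactor B d p i).map ψ₁ = (univFactor B d p i).map ψ₂) : ψ₁ = ψ₂ :=
  Ideal.Quotient.ringHom_ext <| MvPolynomial.ringHom_ext hB fun ⟨i, j⟩ => by
    have h := congr_arg (coeff · j) (hfac i)
    simp only [coeff_map, coeff_univFactor] at h
    exact h

end FactRing

namespace PiTensorProduct

variable {R S ι : Type*} [CommSemiring R] {A : ι → Type*}

def productMap [Fintype ι] [∀ i, CommSemiring (A i)] [∀ i, Algebra R (A i)] [CommSemiring S]
    [Algebra R S] (ψ : ∀ i, A i →ₐ[R] S) : (⨂[R] i, A i) →ₐ[R] S :=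
  liftAlgHom ((MultilinearMap.mkPiAlgebra R ι S).compLinearMap fun i => (ψ i).toLinearMap)
    (by simp) fun x y => by
      simp only [MultilinearMap.compLinearMap_apply, MultilinearMap.mkPiAlgebra_apply]
      rw [← Finset.prod_mul_distrib]
      simp

@[simp]
theorem productMap_singleAlgHom [Fintype ι] [DecidableEq ι] [∀ i, CommSemiring (A i)]
    [∀ i, Algebra R (A i)] [CommSemiring S] [Algebra R S] (ψ : ∀ i, A i →ₐ[R] S) (i : ι)
    (a : A i) : productMap ψ (singleAlgHom i a) = ψ i a := by
  rw [productMap, singleAlgHom_apply, liftAlgHom_apply, lift.tprod,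
    MultilinearMap.compLinearMap_apply, MultilinearMap.mkPiAlgebra_apply,
    Fintype.prod_eq_single i fun j hj => by simp [Pi.mulSingle_eq_of_ne hj]]
  simp

theorem ringHom_ext [Finite ι] [DecidableEq ι] [∀ i, Semiring (A i)] [∀ i, Algebra R (A i)]
    [CommSemiring S] {f g : (⨂[R] i, A i) →+* S}
    (hR : ∀ r, f (algebraMap R _ r) = g (algebraMap R _ r))
    (h : ∀ i, f.comp (singleAlgHom (R := R) (A := A) i : A i →+* _) =
      g.comp (singleAlgHom (R := R) (A := A) i : A i →+* _)) : f = g := by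
  let := (f.comp (algebraMap R _)).toAlgebra
  have key := algHom_ext (f := { f with commutes' := fun _ => rfl })
    (g := { g with commutes' := fun r => (hR r).symm })
    fun i => AlgHom.ext (RingHom.ext_iff.1 (h i))
  exact RingHom.ext (AlgHom.ext_iff.1 key)

end PiTensorProduct

def RingEquiv.toLinearEquivCompHom {A C S T : Type*} [CommSemiring A] [CommSemiring C]
    [Semiring S] [Semiring T] [Algebra A S] [Algebra C T] (φ : A →+* C) (e : S ≃+* T)
    (h : ∀ a, e (algebraMap A S a) = algebraMap C T (φ a)) :
    letI := Module.compHom T φ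
    S ≃ₗ[A] T :=
  letI := Module.compHom T φ
  { e with
    map_smul' := fun a x => show e (a • x) = φ a • e x by
      rw [Algebra.smul_def, map_mul, h, Algebra.smul_def] }

abbrev FactRing.SplitTensor (A : Type*) [CommRing A] {r : ℕ} (d : Fin r → ℕ) (f : A[X]) :=
  ⨂[FactRing A d f] i, SplitRing (FactRing A d f) (d i) (FactRing.univFactor A d f i)

namespace FactRing

variable {A : Type*} [CommRing A] {n r : ℕ} {d : Fin r → ℕ} (f : A[X])

def tensorRoot (s : (i : Fin r) × Fin (d i)) : SplitTensor A d f :=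
  PiTensorProduct.singleAlgHom s.1 (SplitRing.root _ s.2)

theorem map_univFactor_algebraMap_tensor (i : Fin r) :
    (univFactor A d f i).map (algebraMap (FactRing A d f) (SplitTensor A d f)) =
      ∏ k, (X - C (tensorRoot f ⟨i, k⟩)) := by
  rw [← (PiTensorProduct.singleAlgHom i).comp_algebraMap, ← map_map,
    SplitRing.map_algebraMap_eq_prod_X_sub_C_root, Polynomial.map_prod]
  simp [tensorRoot]

theorem map_algebraMap_tensor (e : Fin n ≃ (i : Fin r) × Fin (d i)) :
    f.map ((algebraMap (FactRing A d f) (SplitTensor A d f)).comp (algebraMap A _)) =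
      ∏ v, (X - C (tensorRoot f (e v))) := by
  rw [← map_map, map_algebraMap_eq_prod_univFactor, Polynomial.map_prod,
    e.prod_comp (fun s => X - C (tensorRoot f s)), Fintype.prod_sigma]
  exact Finset.prod_congr rfl fun i _ => map_univFactor_algebraMap_tensor f i

end FactRing

namespace SplitRing

open FactRing

variable {A : Type*} [CommRing A] {n r : ℕ} {d : Fin r → ℕ} (f : A[X])
  (e : Fin n ≃ (i : Fin r) × Fin (d i))

def toSplitTensor : SplitRing A n f →+* SplitTensor A d f :=
  lift _ (fun v => tensorRoot f (e v)) (map_algebraMap_tensor f e)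

@[simp]
theorem toSplitTensor_algebraMap (a : A) :
    toSplitTensor f e (algebraMap A _ a) = algebraMap _ _ (algebraMap A (FactRing A d f) a) :=
  lift_algebraMap _ _ _ a

@[simp]
theorem toSplitTensor_root (v : Fin n) : toSplitTensor f e (root f v) = tensorRoot f (e v) :=
  lift_root _ _ _ v

def blockFactor (i : Fin r) : (SplitRing A n f)[X] :=
  ∏ k : Fin (d i), (X - C (root f (e.symm ⟨i, k⟩)))

theorem natDegree_blockFactor_le (i : Fin r) : (blockFactor f e i).natDegree ≤ d i :=
  natDegree_prod_X_sub_C_le _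

theorem coeff_blockFactor (i : Fin r) : (blockFactor f e i).coeff (d i) = 1 :=
  coeff_prod_X_sub_C_self _

theorem map_algebraMap_eq_prod_blockFactor :
    f.map (algebraMap A (SplitRing A n f)) = ∏ i, blockFactor f e i := by
  rw [map_algebraMap_eq_prod_X_sub_C_root, ← e.symm.prod_comp, Fintype.prod_sigma]
  rfl

def blockFactorization : FactRing A d f →+* SplitRing A n f :=
  FactRing.lift _ (blockFactor f e) (natDegree_blockFactor_le f e) (coeff_blockFactor f e)
    (map_algebraMap_eq_prod_blockFactor f e)

@[simp]
theorem blockFactorization_algebraMap (a : A) :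
    blockFactorization f e (algebraMap A _ a) = algebraMap A _ a :=
  FactRing.lift_algebraMap _ _ _ _ _ a

theorem map_univFactor_blockFactorization (i : Fin r) :
    (univFactor A d f i).map (blockFactorization f e) = blockFactor f e i :=
  map_univFactor_lift _ _ _ _ _ i

def ofSplitTensor : SplitTensor A d f →+* SplitRing A n f :=
  letI := (blockFactorization f e).toAlgebra
  PiTensorProduct.productMap (fun i => liftAlgHom (fun k => root f (e.symm ⟨i, k⟩))
    (map_univFactor_blockFactorization f e i)) |>.toRingHom

theorem ofSplitTensor_algebraMap (c : FactRing A d f) :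
    ofSplitTensor f e (algebraMap _ _ c) = blockFactorization f e c :=
  letI := (blockFactorization f e).toAlgebra
  AlgHom.commutes _ c

theorem ofSplitTensor_tensorRoot (s : (i : Fin r) × Fin (d i)) :
    ofSplitTensor f e (tensorRoot f s) = root f (e.symm s) := by
  let := (blockFactorization f e).toAlgebra
  simp only [ofSplitTensor, tensorRoot, AlgHom.toRingHom_eq_coe, RingHom.coe_coe,
    PiTensorProduct.productMap_singleAlgHom]
  exact liftAlgHom_root _ _ s.2

theorem toSplitTensor_comp_blockFactorization :
    (toSplitTensor f e).comp (blockFactorization f e) = algebraMap _ _ := by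
  refine FactRing.ringHom_ext (fun a => by simp) fun i => ?_
  rw [← map_map, map_univFactor_blockFactorization, blockFactor, Polynomial.map_prod,
    map_univFactor_algebraMap_tensor]
  simp

theorem ofSplitTensor_comp_toSplitTensor :
    (ofSplitTensor f e).comp (toSplitTensor f e) = RingHom.id _ :=
  ringHom_ext (fun a => by simp [ofSplitTensor_algebraMap])
    fun v => by simp [ofSplitTensor_tensorRoot]

theorem toSplitTensor_comp_ofSplitTensor :
    (toSplitTensor f e).comp (ofSplitTensor f e) = RingHom.id _ := by
  have hC (c : FactRing A d f) :
      toSplitTensor f e (ofSplitTensor f e (algebraMap _ _ c)) = algebraMap _ _ c := by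
    rw [ofSplitTensor_algebraMap, ← RingHom.comp_apply, toSplitTensor_comp_blockFactorization]
  refine PiTensorProduct.ringHom_ext hC fun i => ringHom_ext (fun c => ?_) fun k => ?_
  · simpa using hC c
  · have h := congr_arg (toSplitTensor f e) (ofSplitTensor_tensorRoot f e ⟨i, k⟩)
    rw [toSplitTensor_root, e.apply_symm_apply] at h
    exact h

def equivSplitTensor : SplitRing A n f ≃+* SplitTensor A d f :=
  RingEquiv.ofRingHom (toSplitTensor f e) (ofSplitTensor f e)
    (toSplitTensor_comp_ofSplitTensor f e) (ofSplitTensor_comp_toSplitTensor f e)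

end SplitRing

end

theorem splitting_ring_iso_piTensor_of_factorization_general
    (A : Type*) [CommRing A] (n r : ℕ) (d : Fin r → ℕ) (hd : ∑ i, d i = n)
    (f : Polynomial A) :
    letI C := FactRing A d f
    letI T := PiTensorProduct C (fun i : Fin r => SplitRing C (d i) (FactRing.univFactor A d f i))
    letI : Module A T := Module.compHom T (algebraMap A C)
    Nonempty (SplitRing A n f ≃ₗ[A] T) :=
  ⟨(SplitRing.equivSplitTensor f (Fintype.equivOfCardEq (by simp [hd]))).toLinearEquivCompHom _
    (SplitRing.toSplitTensor_algebraMap f _)⟩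

theorem splitting_ring_iso_piTensor_of_factorization
    (A : Type*) [CommRing A] [Algebra ℚ A] (n r : ℕ) (d : Fin r → ℕ) (hd : ∑ i, d i = n)
    (f : Polynomial A) (hf : f.Monic) (hdeg : f.natDegree = n) :
    letI C := FactRing A d f
    letI T := PiTensorProduct C (fun i : Fin r => SplitRing C (d i) (FactRing.univFactor A d f i))
    letI : Module A T := Module.compHom T (algebraMap A C)
    Nonempty (SplitRing A n f ≃ₗ[A] T) :=
  splitting_ring_iso_piTensor_of_factorization_general A n r d hd f
end

section
/- Let B be a graded-commutative Z-graded superalgebra with finite-dimensional graded pieces, and consider the one-parameter family of algebras B_t obtained by scaling all odd generators by t. Let f ∈ B be homogeneous with specializations f_t, and let f_0 be the specialization at t = 0. If multiplication by f_0 is injective on B (i.e., f_0 is a nonzerodivisor), then f = f_1 is a nonzerodivisor on B. -/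
/-!
Fix a degree `i`. Multiplication by `f_t` is a linear map `𝒜 i → B` depending polynomially on
`t`; composing with a left inverse of its (injective) value at `t = 0` gives a polynomial family
of endomorphisms of the finite-dimensional space `𝒜 i` whose determinant is a polynomial in `t`
equal to `1` at `t = 0`. Hence multiplication by `f_t` is injective on `𝒜 i` for all but finitely
many `t`, in particular for some `t ≠ 0`. Since `φ t` is a graded automorphism for `t ≠ 0`,
applying it to `f * y = 0` with `y ∈ 𝒜 i` gives `f_t * φ t y = 0`, so `y = 0`; a general `y` is
handled componentwise because `f` is homogeneous.
-/

open Polynomial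

section PolynomialFamily

variable {K V W : Type*} [Field K] [AddCommGroup V] [Module K V] [FiniteDimensional K V]
  [AddCommGroup W] [Module K W]

theorem LinearMap.exists_eval_eq_det_of_eq_sum_pow_smul {k : ℕ} {E : K → Module.End K V}
    {A : Fin k → Module.End K V} (hE : ∀ t, E t = ∑ j : Fin k, t ^ (j : ℕ) • A j) :
    ∃ P : K[X], ∀ t : K, P.eval t = LinearMap.det (E t) := by
  let b := Module.finBasis K V
  let Q : Matrix _ _ K[X] :=
    ∑ j : Fin k, (X : K[X]) ^ (j : ℕ) • (LinearMap.toMatrix b b (A j)).map C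
  refine ⟨Q.det, fun t => ?_⟩
  have hQ : Q.map (eval t) = LinearMap.toMatrix b b (E t) := by
    ext r s
    simp only [Q, hE, map_sum, map_smul, Matrix.map_apply, Matrix.sum_apply, Matrix.smul_apply,
      smul_eq_mul, eval_finsetSum, eval_mul, eval_pow, eval_X, eval_C]
  rw [← coe_evalRingHom, RingHom.map_det, RingHom.mapMatrix_apply, coe_evalRingHom, hQ,
    LinearMap.det_toMatrix]

theorem LinearMap.finite_setOf_not_injective_of_eq_sum_pow_smul {k : ℕ} {L : K → V →ₗ[K] W}
    {A : Fin k → V →ₗ[K] W} (hL : ∀ t, L t = ∑ j : Fin k, t ^ (j : ℕ) • A j) {t₀ : K}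
    (h₀ : Function.Injective (L t₀)) :
    {t : K | ¬ Function.Injective (L t)}.Finite := by
  obtain ⟨g, hg⟩ := (L t₀).exists_leftInverse_of_injective (LinearMap.ker_eq_bot.mpr h₀)
  obtain ⟨P, hP⟩ := exists_eval_eq_det_of_eq_sum_pow_smul (E := fun t => g ∘ₗ L t)
    (A := fun j => g ∘ₗ A j) fun t => by ext; simp [hL]
  have hP₀ : P.eval t₀ ≠ 0 := by
    rw [hP, hg, LinearMap.det_id]
    exact one_ne_zero
  refine (finite_setOfPred_isRoot (p := P) (by rintro rfl; simp at hP₀)).subset fun t ht => ?_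
  by_contra hroot
  have hdet : LinearMap.det (g ∘ₗ L t) ≠ 0 := by rw [← hP]; exact hroot
  have hinj : Function.Injective (g ∘ₗ L t) :=
    LinearMap.ker_eq_bot.mp (not_not.mp (mt LinearMap.det_eq_zero_iff_ker_ne_bot.mpr hdet))
  exact ht (Function.Injective.of_comp (f := g) hinj)

theorem LinearMap.exists_ne_injective_of_eq_sum_pow_smul [Infinite K] {k : ℕ}
    {L : K → V →ₗ[K] W} {A : Fin k → V →ₗ[K] W} (hL : ∀ t, L t = ∑ j : Fin k, t ^ (j : ℕ) • A j)
    {t₀ : K} (h₀ : Function.Injective (L t₀)) (s : K) :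
    ∃ t ≠ s, Function.Injective (L t) := by
  obtain ⟨t, ht⟩ := ((finite_setOf_not_injective_of_eq_sum_pow_smul hL h₀).union
    (Set.finite_singleton s)).infinite_compl.nonempty
  simp only [Set.mem_compl_iff, Set.mem_union, Set.mem_ofPred_eq, not_or, not_not] at ht
  exact ⟨t, ht.2, ht.1⟩

end PolynomialFamily

theorem DirectSum.eq_zero_of_mul_eq_zero_of_forall_homogeneous {ι R σ : Type*} [DecidableEq ι]
    [AddLeftCancelMonoid ι] [Ring R] [SetLike σ R] [AddSubgroupClass σ R] {𝒜 : ι → σ}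
    [GradedRing 𝒜] {d : ι} {f : R} (hf : f ∈ 𝒜 d)
    (h : ∀ i, ∀ y ∈ 𝒜 i, f * y = 0 → y = 0) : ∀ y, f * y = 0 → y = 0 := by
  classical
  intro y hy
  rw [← sum_support_decompose 𝒜 y]
  refine Finset.sum_eq_zero fun i _ => h i _ (decompose 𝒜 y i).2 ?_
  rw [← coe_decompose_mul_add_of_left_mem 𝒜 hf, hy, decompose_zero, zero_apply,
    ZeroMemClass.coe_zero]

theorem nonzerodivisor_of_specialization_nonzerodivisor
    (B : Type*) [Ring B] [Algebra ℂ B]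
    (𝒜 : ℤ → Submodule ℂ B) [GradedAlgebra 𝒜]
    (hfd : ∀ i : ℤ, FiniteDimensional ℂ (𝒜 i))
    (φ : ℂ → (B →ₐ[ℂ] B))
    (hone : φ 1 = AlgHom.id ℂ B)
    (hmul : ∀ s t : ℂ, (φ s).comp (φ t) = φ (s * t))
    (hgraded : ∀ (t : ℂ) (i : ℤ), ∀ x ∈ 𝒜 i, φ t x ∈ 𝒜 i)
    (hpoly : ∀ x : B, ∃ (k : ℕ) (c : Fin k → B), ∀ t : ℂ, φ t x = ∑ j : Fin k, t ^ (j : ℕ) • c j)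
    (d₀ : ℤ) (f : B) (hf : f ∈ 𝒜 d₀)
    (h0 : ∀ y : B, φ 0 f * y = 0 → y = 0) :
    ∀ y : B, f * y = 0 → y = 0 := by
  have hφ_injective : ∀ t ≠ 0, Function.Injective (φ t) := fun t ht =>
    Function.LeftInverse.injective (g := φ t⁻¹) fun y => by
      rw [← AlgHom.comp_apply, hmul, inv_mul_cancel₀ ht, hone, AlgHom.id_apply]
  refine DirectSum.eq_zero_of_mul_eq_zero_of_forall_homogeneous hf fun i y hy hfy => ?_
  have := hfd i
  obtain ⟨k, c, hc⟩ := hpoly f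
  let L : ℂ → 𝒜 i →ₗ[ℂ] B := fun t => LinearMap.mulLeft ℂ (φ t f) ∘ₗ (𝒜 i).subtype
  have hL : ∀ t, L t = ∑ j : Fin k, t ^ (j : ℕ) • LinearMap.mulLeft ℂ (c j) ∘ₗ (𝒜 i).subtype := by
    intro t
    ext
    simp [L, hc, Finset.sum_mul]
  have hL₀ : Function.Injective (L 0) :=
    (injective_iff_map_eq_zero _).mpr fun x hx => Subtype.ext (h0 x hx)
  obtain ⟨t, ht, hLt⟩ := LinearMap.exists_ne_injective_of_eq_sum_pow_smul hL hL₀ 0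
  have hφy : φ t y = 0 := congrArg Subtype.val <| (injective_iff_map_eq_zero _).mp hLt
    ⟨φ t y, hgraded t i y hy⟩ (by simp [L, ← map_mul, hfy])
  exact hφ_injective t ht (by rw [hφy, map_zero])
end

section
/- Let A_1, A_2, B, C_1, C_2 be complex vector spaces with a_1 + a_2 + max(c_1,c_2) ≤ b (dimensions as indicated). Define F = Fl(a_1, a_1+c_1; B), the partial flag variety of flags R ⊂ S ⊂ B with dim R = a_1, dim S = a_1+c_1, and let Z̃ be the total space of the vector bundle Hom(A_1,R) ⊕ Hom(C_1,S) ⊕ Hom(B/S, A_2) ⊕ Hom(B/R, C_2) over F. Then the natural projection π: Z̃ → Hom(A_1,B)×Hom(B,A_2)×Hom(C_1,B)×Hom(B,C_2) is a birational morphism onto the variety Z of quadruples (α_1,α_2,γ_1,γ_2) with α_2α_1 = γ_2α_1 = α_2γ_1 = 0. -/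
/-!
Every quadruple in `Z` lifts to `Z̃`: choose `R` between `im α₁` and `ker α₂ ∩ ker γ₂`, then `S`
between `R + im γ₁` and `ker α₂`; the dimension bound `a₁ + a₂ + max c₁ c₂ ≤ b` leaves room
for both. When `im α₁ + im γ₁` has dimension `a₁ + c₁` it fills `S`, which forces
`R = im α₁` and `S = im α₁ + im γ₁`, so `π` has the inverse `z ↦ (im α₁, im α₁ + im γ₁, z)`
there; an injection `A₁ × C₁ → B` shows this locus is nonempty.
-/

open Module LinearMap Submodule

section DivisionRing

variable {K V W : Type*} [DivisionRing K] [AddCommGroup V] [Module K V]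
  [AddCommGroup W] [Module K W]

theorem Submodule.exists_le_le_finrank_eq [FiniteDimensional K V] {P Q : Submodule K V}
    (hPQ : P ≤ Q) {n : ℕ} (hP : finrank K P ≤ n) (hQ : n ≤ finrank K Q) :
    ∃ U : Submodule K V, P ≤ U ∧ U ≤ Q ∧ finrank K U = n := by
  induction n, hP using Nat.le_induction with
  | base => exact ⟨P, le_rfl, hPQ, rfl⟩
  | succ n _ ih =>
    obtain ⟨U, hPU, hUQ, hU⟩ := ih (by omega)
    obtain ⟨x, hxQ, hxU⟩ := SetLike.exists_of_lt (hUQ.lt_of_ne (by rintro rfl; omega))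
    exact ⟨U ⊔ K ∙ x, hPU.trans le_sup_left, sup_le hUQ ((span_singleton_le_iff_mem x Q).2 hxQ),
      by rw [finrank_sup_span_singleton hxU, hU]⟩

theorem Submodule.eq_and_sup_eq_of_finrank_sup_eq [FiniteDimensional K V]
    {U U' R S : Submodule K V} (hU : U ≤ R) (hU' : U' ≤ S) (hRS : R ≤ S) {a c : ℕ}
    (hR : finrank K R = a) (hS : finrank K S = a + c) (hU'c : finrank K U' ≤ c)
    (hUU' : finrank K (U ⊔ U' : Submodule K V) = a + c) : U = R ∧ U ⊔ U' = S := by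
  have hsup := finrank_add_le_finrank_add_finrank U U'
  exact ⟨eq_of_le_of_finrank_le hU (by omega),
    eq_of_le_of_finrank_le (sup_le (hU.trans hRS) hU') (by omega)⟩

theorem LinearMap.finrank_le_finrank_ker_add [FiniteDimensional K V] [FiniteDimensional K W]
    (f : V →ₗ[K] W) : finrank K V ≤ finrank K (ker f) + finrank K W := by
  rw [← f.finrank_range_add_finrank_ker, add_comm]
  exact Nat.add_le_add_left (range f).finrank_le _

theorem LinearMap.exists_injective_of_finrank_le [FiniteDimensional K V] [FiniteDimensional K W]
    (h : finrank K V ≤ finrank K W) : ∃ f : V →ₗ[K] W, Function.Injective f := by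
  obtain ⟨U, -, -, hU⟩ := exists_le_le_finrank_eq (bot_le : ⊥ ≤ (⊤ : Submodule K W))
    (by simp) (h.trans_eq (finrank_top K W).symm)
  obtain ⟨e⟩ := FiniteDimensional.nonempty_linearEquiv_of_finrank_eq hU.symm
  exact ⟨U.subtype ∘ₗ e.toLinearMap, U.injective_subtype.comp e.injective⟩

end DivisionRing

section Collapsing

variable {K A₁ A₂ B C₁ C₂ : Type*} [DivisionRing K]
  [AddCommGroup A₁] [Module K A₁] [FiniteDimensional K A₁]
  [AddCommGroup A₂] [Module K A₂] [FiniteDimensional K A₂]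
  [AddCommGroup B] [Module K B] [FiniteDimensional K B]
  [AddCommGroup C₁] [Module K C₁] [FiniteDimensional K C₁]
  [AddCommGroup C₂] [Module K C₂] [FiniteDimensional K C₂]

theorem LinearMap.exists_finrank_range_sup_range_eq
    (h : finrank K A₁ + finrank K C₁ ≤ finrank K B) :
    ∃ (f : A₁ →ₗ[K] B) (g : C₁ →ₗ[K] B),
      finrank K (range f ⊔ range g : Submodule K B) = finrank K A₁ + finrank K C₁ := by
  obtain ⟨φ, hφ⟩ := exists_injective_of_finrank_le (K := K) (V := A₁ × C₁) (W := B)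
    (by rwa [finrank_prod])
  refine ⟨φ ∘ₗ inl K A₁ C₁, φ ∘ₗ inr K A₁ C₁, ?_⟩
  rw [← range_coprod, coprod_comp_inl_inr, finrank_range_of_inj hφ, finrank_prod]

theorem exists_flag_of_comp_eq_zero {α₁ : A₁ →ₗ[K] B} {α₂ : B →ₗ[K] A₂}
    {γ₁ : C₁ →ₗ[K] B} {γ₂ : B →ₗ[K] C₂}
    (h₁ : α₂ ∘ₗ α₁ = 0) (h₂ : γ₂ ∘ₗ α₁ = 0) (h₃ : α₂ ∘ₗ γ₁ = 0)
    (hdim : finrank K A₁ + finrank K A₂ + max (finrank K C₁) (finrank K C₂) ≤ finrank K B) :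
    ∃ R S : Submodule K B, R ≤ S ∧ finrank K R = finrank K A₁ ∧
      finrank K S = finrank K A₁ + finrank K C₁ ∧ range α₁ ≤ R ∧ range γ₁ ≤ S ∧
      S ≤ ker α₂ ∧ R ≤ ker γ₂ := by
  have hkerα₂ := α₂.finrank_le_finrank_ker_add
  have hker := (α₂.prod γ₂).finrank_le_finrank_ker_add
  rw [ker_prod, finrank_prod] at hker
  obtain ⟨R, hα₁R, hR, hRa⟩ := exists_le_le_finrank_eq
    (le_inf (range_le_ker_iff.2 h₁) (range_le_ker_iff.2 h₂)) (finrank_range_le α₁) (by omega)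
  have hRγ₁ : finrank K (R ⊔ range γ₁ : Submodule K B) ≤ finrank K A₁ + finrank K C₁ :=
    (finrank_add_le_finrank_add_finrank _ _).trans (by rw [hRa]; gcongr; exact finrank_range_le γ₁)
  obtain ⟨S, hS, hSα₂, hSa⟩ := exists_le_le_finrank_eq
    (sup_le (hR.trans inf_le_left) (range_le_ker_iff.2 h₃)) hRγ₁ (by omega)
  exact ⟨R, S, le_sup_left.trans hS, hRa, hSa, hα₁R, le_sup_right.trans hS, hSα₂,
    hR.trans inf_le_right⟩

end Collapsing

theorem kempf_collapsing_birational_onto_variety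
    (a₁ a₂ b c₁ c₂ : ℕ)
    (A₁ A₂ B C₁ C₂ : Type*)
    [AddCommGroup A₁] [Module ℂ A₁] [FiniteDimensional ℂ A₁]
    [AddCommGroup A₂] [Module ℂ A₂] [FiniteDimensional ℂ A₂]
    [AddCommGroup B] [Module ℂ B] [FiniteDimensional ℂ B]
    [AddCommGroup C₁] [Module ℂ C₁] [FiniteDimensional ℂ C₁]
    [AddCommGroup C₂] [Module ℂ C₂] [FiniteDimensional ℂ C₂]
    (hA₁ : Module.finrank ℂ A₁ = a₁) (hA₂ : Module.finrank ℂ A₂ = a₂)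
    (hB : Module.finrank ℂ B = b) (hC₁ : Module.finrank ℂ C₁ = c₁)
    (hC₂ : Module.finrank ℂ C₂ = c₂)
    (hdim : a₁ + a₂ + max c₁ c₂ ≤ b) :
    -- the ambient affine space of quadruples
    let Quad := (A₁ →ₗ[ℂ] B) × (B →ₗ[ℂ] A₂) × (C₁ →ₗ[ℂ] B) × (B →ₗ[ℂ] C₂)
    -- the variety Z
    let Z : Set Quad := { z |
      z.2.1 ∘ₗ z.1 = 0 ∧ z.2.2.2 ∘ₗ z.1 = 0 ∧ z.2.1 ∘ₗ z.2.2.1 = 0 }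
    -- the total space Z̃ over the flag variety Fl(a₁, a₁+c₁; B)
    let Zt : Set (Submodule ℂ B × Submodule ℂ B × Quad) := { w |
      w.1 ≤ w.2.1 ∧
      Module.finrank ℂ w.1 = a₁ ∧ Module.finrank ℂ w.2.1 = a₁ + c₁ ∧
      LinearMap.range w.2.2.1 ≤ w.1 ∧
      LinearMap.range w.2.2.2.2.1 ≤ w.2.1 ∧
      w.2.1 ≤ LinearMap.ker w.2.2.2.1 ∧
      w.1 ≤ LinearMap.ker w.2.2.2.2.2 }
    -- the projection π : Z̃ → affine space of quadruples
    let π : Submodule ℂ B × Submodule ℂ B × Quad → Quad := fun w => w.2.2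
    -- the open locus where α₁ + γ₁ has maximal rank a₁ + c₁
    let maxRank : Quad → Prop := fun z =>
      Module.finrank ℂ (LinearMap.range z.1 ⊔ LinearMap.range z.2.2.1 : Submodule ℂ B)
        = a₁ + c₁
    -- π is surjective onto Z ...
    π '' Zt = Z ∧
    -- ... and is injective over the maximal-rank locus, with image that locus of Z ...
    Set.InjOn π { w ∈ Zt | maxRank (π w) } ∧
    π '' { w ∈ Zt | maxRank (π w) } = { z ∈ Z | maxRank z } ∧
    -- ... which is nonempty
    { z ∈ Z | maxRank z }.Nonempty := by
  intro Quad Z Zt π maxRank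
  subst hA₁ hA₂ hB hC₁ hC₂
  have hZ : Zt ⊆ π ⁻¹' Z := by
    rintro ⟨R, S, α₁, α₂, γ₁, γ₂⟩ ⟨hRS, -, -, hα₁, hγ₁, hα₂, hγ₂⟩
    exact ⟨range_le_ker_iff.1 (hα₁.trans (hRS.trans hα₂)), range_le_ker_iff.1 (hα₁.trans hγ₂),
      range_le_ker_iff.1 (hγ₁.trans hα₂)⟩
  have himage : π '' Zt = Z := by
    refine (Set.image_subset_iff.2 hZ).antisymm ?_
    rintro ⟨α₁, α₂, γ₁, γ₂⟩ ⟨h₁, h₂, h₃⟩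
    obtain ⟨R, S, hw⟩ := exists_flag_of_comp_eq_zero h₁ h₂ h₃ hdim
    exact ⟨(R, S, α₁, α₂, γ₁, γ₂), hw, rfl⟩
  have hinv : Set.LeftInvOn (fun z : Quad => (range z.1, range z.1 ⊔ range z.2.2.1, z)) π
      { w ∈ Zt | maxRank (π w) } := by
    rintro ⟨R, S, z⟩ ⟨⟨hRS, hR, hS, hα₁, hγ₁, -, -⟩, hmax⟩
    dsimp only at hRS hR hS hα₁ hγ₁
    obtain ⟨rfl, rfl⟩ :=
      eq_and_sup_eq_of_finrank_sup_eq hα₁ hγ₁ hRS hR hS (finrank_range_le _) hmax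
    rfl
  obtain ⟨α₁, γ₁, hmax⟩ :=
    exists_finrank_range_sup_range_eq (K := ℂ) (A₁ := A₁) (C₁ := C₁) (B := B) (by omega)
  refine ⟨himage, hinv.injOn, ?_, ⟨(α₁, 0, γ₁, 0), ⟨zero_comp _, zero_comp _, zero_comp _⟩, hmax⟩⟩
  exact (Set.image_inter_preimage π Zt {z | maxRank z}).trans (by rw [himage]; rfl)
end

section
/- In the ring of symmetric functions in two independent alphabets (or for characters of GL(m|n)), let h(k) and h̄(k) denote the complete homogeneous symmetric functions of the two families (with h(k) = h̄(k) = 0 for k < 0 and = 1 for k = 0). Fix partitions λ with at most p parts and μ with at most q parts, and form the (p+q)×(p+q) matrix M|L with M_{i,j} = h̄(μ_{q+1-j} - i + j) for 1 ≤ j ≤ q and L_{i,j} = h(λ_j + i - q - j) for 1 ≤ j ≤ p (columns q+1,...,q+p). Then the Laplace expansion along the first q columns yields det(M|L) = Σ_γ (-1)^{|γ|} s_{μ/γ}[h̄] · s_{λ/γ^T}[h], where the sum is over all partitions γ contained in the q × p rectangle and s_{α/β}[h] denotes the Jacobi–Trudi determinant det(h(α_j - β_i - j + i)). -/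
/-!
Laplace expansion along the first `q` columns. Killing the entries of `A` outside the two diagonal
blocks cut out by a `q`-subset `S` of the rows splits `det A` into a sum over `S`, since every
permutation survives for exactly one `S`. Sorting the rows of `S` to the top makes each masked matrix
block diagonal, at the cost of the sign `(-1) ^ inv S`, where `inv S` counts the pairs `y < x` with
`x ∈ S`, `y ∉ S`.

A `q`-subset `S` with elements `s₀ < ⋯ < s_{q-1}` corresponds to the partition `γ` in the `q × p`
box with `γ (q - 1 - b) = #{y ∉ S | y < s_b} = s_b - b`. Then `|γ| = inv S`, and the `i`-th element
of `Sᶜ` is `i + q - γᵀ i`; this identifies the two minors with the skew Jacobi–Trudi determinants.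
-/

open Finset Equiv

namespace Finset

variable {α : Type*} [LinearOrder α] {s : Finset α} {k : ℕ}

theorem card_filter_eq_card_filter_orderEmbOfFin (h : #s = k) (P : α → Prop) [DecidablePred P] :
    #{y ∈ s | P y} = #{j | P (s.orderEmbOfFin h j)} := by
  conv_lhs => rw [← s.map_orderEmbOfFin_univ h, filter_map, card_map]
  rfl

theorem lt_card_filter_lt_iff (h : #s = k) (i : Fin k) (x : α) :
    (i : ℕ) < #{y ∈ s | y < x} ↔ s.orderEmbOfFin h i < x := by
  rw [card_filter_eq_card_filter_orderEmbOfFin h]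
  constructor
  · intro hi
    by_contra! hx
    have : ({j | s.orderEmbOfFin h j < x} : Finset (Fin k)) ⊆ Iio i := fun j hj => by
      simp only [mem_filter_univ] at hj
      exact mem_Iio.2 ((s.orderEmbOfFin h).lt_iff_lt.1 (hj.trans_le hx))
    have := card_le_card this
    rw [Fin.card_Iio] at this
    omega
  · intro hx
    have : Iic i ⊆ ({j | s.orderEmbOfFin h j < x} : Finset (Fin k)) := fun j hj =>
      (mem_filter_univ _).2 (((s.orderEmbOfFin h).le_iff_le.2 (mem_Iic.1 hj)).trans_lt hx)
    have := card_le_card this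
    rw [Fin.card_Iic] at this
    omega

@[simp]
theorem orderEmbOfFin_compl_notMem [Fintype α] (h : #sᶜ = k) (j : Fin k) :
    sᶜ.orderEmbOfFin h j ∉ s :=
  mem_compl.1 (orderEmbOfFin_mem _ _ _)

theorem card_filter_lt_orderEmbOfFin (h : #s = k) (i : Fin k) :
    #{y ∈ s | y < s.orderEmbOfFin h i} = i := by
  rw [card_filter_eq_card_filter_orderEmbOfFin h]
  simp only [OrderEmbedding.lt_iff_lt]
  rw [filter_gt_eq_Iio, Fin.card_Iio]

end Finset

theorem Fin.card_filter_lt_add_card_filter_compl_lt {n : ℕ} (s : Finset (Fin n)) (x : Fin n) :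
    #{y ∈ s | y < x} + #{y ∈ sᶜ | y < x} = x := by
  rw [← Fin.card_Iio x, ← card_filter_add_card_filter_not (s := Iio x) (· ∈ s)]
  congr 2 <;> ext y <;> simp [and_comm]

namespace Finset

variable {q p : ℕ} {S : Finset (Fin (q + p))}

theorem card_compl_of_card_eq (hS : #S = q) : #Sᶜ = p := by
  simp [card_compl, hS]

def shufflePerm (hS : #S = q) : Perm (Fin (q + p)) :=
  finSumFinEquiv.symm.trans (finSumEquivOfFinset hS (card_compl_of_card_eq hS))

@[simp]
theorem shufflePerm_castAdd (hS : #S = q) (j : Fin q) :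
    shufflePerm hS (Fin.castAdd p j) = S.orderEmbOfFin hS j := by
  simp [shufflePerm]

@[simp]
theorem shufflePerm_natAdd (hS : #S = q) (j : Fin p) :
    shufflePerm hS (Fin.natAdd q j) = Sᶜ.orderEmbOfFin (card_compl_of_card_eq hS) j := by
  simp [shufflePerm]

theorem shufflePerm_symm_lt_iff (hS : #S = q) {x y : Fin (q + p)} (hxy : x < y) :
    (shufflePerm hS).symm x < (shufflePerm hS).symm y ↔ (y ∈ S → x ∈ S) := by
  obtain ⟨a, rfl⟩ := (shufflePerm hS).surjective x
  obtain ⟨b, rfl⟩ := (shufflePerm hS).surjective y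
  simp only [symm_apply_apply]
  induction a using Fin.addCases <;> induction b using Fin.addCases <;>
    simp_all [← Fin.val_fin_lt] <;> omega

theorem sign_shufflePerm (hS : #S = q) :
    Perm.sign (shufflePerm hS) = (-1) ^ (∑ x ∈ S, #{y ∈ Sᶜ | y < x}) := by
  rw [← Perm.sign_inv, Perm.sign_eq_prod_prod_Iio, ← prod_pow_eq_pow_sum,
    ← prod_filter_mul_prod_filter_not univ (· ∈ S), filter_mem_eq_inter, univ_inter]
  have hinner (x : Fin (q + p)) : ∏ y ∈ Iio x,
      (if (shufflePerm hS)⁻¹ y < (shufflePerm hS)⁻¹ x then 1 else -1 : ℤˣ) =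
        if x ∈ S then (-1) ^ #{y ∈ Sᶜ | y < x} else 1 := by
    calc _ = ∏ y ∈ Iio x, (if x ∈ S → y ∈ S then 1 else -1 : ℤˣ) :=
          prod_congr rfl fun y hy => by
            simp only [Perm.inv_def, shufflePerm_symm_lt_iff hS (mem_Iio.1 hy)]
      _ = _ := by
          split_ifs with hx
          · rw [prod_ite, prod_const_one, one_mul, prod_const]
            congr 2
            ext y
            simp [hx, and_comm]
          · simp [hx]
  simp only [hinner]
  rw [prod_congr rfl fun x hx => if_pos hx, prod_congr rfl fun x hx => if_neg (by simpa using hx),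
    prod_const_one, mul_one]

def boxPartition (hS : #S = q) (a : Fin q) : Fin (p + 1) :=
  ⟨#{y ∈ Sᶜ | y < S.orderEmbOfFin hS a.rev},
    Nat.lt_succ_of_le ((card_filter_le _ _).trans (card_compl_of_card_eq hS).le)⟩

theorem boxPartition_rev_add (hS : #S = q) (b : Fin q) :
    (boxPartition hS b.rev : ℕ) + b = S.orderEmbOfFin hS b := by
  have := Fin.card_filter_lt_add_card_filter_compl_lt S (S.orderEmbOfFin hS b)
  rw [card_filter_lt_orderEmbOfFin] at this
  simp only [boxPartition, Fin.rev_rev]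
  omega

theorem boxPartition_antitone (hS : #S = q) : Antitone (boxPartition hS) := fun a b hab =>
  Fin.le_iff_val_le_val.2 <| card_le_card fun _ => by
    simp only [mem_filter]
    exact And.imp_right fun hy =>
      hy.trans_le <| (S.orderEmbOfFin hS).monotone (Fin.rev_le_rev.2 hab)

theorem sum_boxPartition (hS : #S = q) :
    ∑ a, (boxPartition hS a : ℕ) = ∑ x ∈ S, #{y ∈ Sᶜ | y < x} := by
  rw [← Equiv.sum_comp Fin.revPerm]
  simp only [boxPartition, Fin.revPerm_apply, Fin.rev_rev]
  conv_rhs => arg 1; rw [← S.image_orderEmbOfFin_univ hS]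
  rw [sum_image fun _ _ _ _ h => (S.orderEmbOfFin hS).injective h]

theorem card_lt_boxPartition_add (hS : #S = q) (i : Fin p) :
    #{a | (i : ℕ) < boxPartition hS a} + Sᶜ.orderEmbOfFin (card_compl_of_card_eq hS) i = q + i := by
  set t := Sᶜ.orderEmbOfFin (card_compl_of_card_eq hS) i
  have htS : t ∉ S := orderEmbOfFin_compl_notMem _ i
  have hgt : #{a | (i : ℕ) < boxPartition hS a} = #{y ∈ S | t < y} := by
    rw [card_filter_eq_card_filter_orderEmbOfFin hS]
    refine card_equiv Fin.revPerm fun a => ?_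
    rw [mem_filter_univ, mem_filter_univ]
    exact lt_card_filter_lt_iff _ i _
  have hsplit : #{y ∈ S | t < y} + #{y ∈ S | y < t} = #S := by
    rw [← card_filter_add_card_filter_not (s := S) (t < ·)]
    congr 2
    refine filter_congr fun y hy => ?_
    rw [not_lt, le_iff_lt_or_eq, or_iff_left (ne_of_mem_of_not_mem hy htS)]
  have hbelow := Fin.card_filter_lt_add_card_filter_compl_lt S t
  rw [card_filter_lt_orderEmbOfFin] at hbelow
  omega

theorem boxPartition_injective :
    Function.Injective fun S : {S : Finset (Fin (q + p)) // #S = q} => boxPartition S.2 := by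
  rintro ⟨S, hS⟩ ⟨T, hT⟩ h
  have hemb : ⇑(S.orderEmbOfFin hS) = T.orderEmbOfFin hT := funext fun b => Fin.ext <| by
    rw [← boxPartition_rev_add, ← boxPartition_rev_add,
      show boxPartition hS = boxPartition hT from h]
  exact Subtype.ext <| coe_injective <| by
    rw [← S.range_orderEmbOfFin hS, ← T.range_orderEmbOfFin hT, hemb]

theorem exists_boxPartition_eq {γ : Fin q → Fin (p + 1)} (hγ : Antitone γ) :
    ∃ S : {S : Finset (Fin (q + p)) // #S = q}, boxPartition S.2 = γ := by
  let δ (b : Fin q) : Fin (q + p) := ⟨γ b.rev + b, by omega⟩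
  have hδ : StrictMono δ := fun b c hbc => by
    have := Fin.le_iff_val_le_val.1 (hγ (Fin.rev_le_rev.2 hbc.le))
    simp only [δ, Fin.lt_def] at this ⊢
    omega
  have hcard : #(univ.image δ) = q := by simp [card_image_of_injective _ hδ.injective]
  refine ⟨⟨_, hcard⟩, funext fun a => Fin.ext ?_⟩
  have := boxPartition_rev_add hcard a.rev
  rw [← orderEmbOfFin_unique hcard (fun b => mem_image_of_mem δ (mem_univ b)) hδ] at this
  simp only [Fin.rev_rev, δ] at this
  omega

end Finset

namespace Matrix

variable {R : Type*} [CommRing R] {n : Type*} [Fintype n] [DecidableEq n]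

def maskBlocks (S C : Finset n) (A : Matrix n n R) : Matrix n n R :=
  of fun i j => if (i ∈ S ↔ j ∈ C) then A i j else 0

theorem det_eq_sum_det_maskBlocks {k : ℕ} {C : Finset n} (hC : #C = k) (A : Matrix n n R) :
    A.det = ∑ S : {S : Finset n // #S = k}, (maskBlocks S.1 C A).det := by
  simp only [det_apply, maskBlocks, of_apply]
  rw [sum_comm]
  refine sum_congr rfl fun σ _ => ?_
  rw [← smul_sum]
  congr 1
  have hsupp (S : Finset n) : (∀ i ∈ univ, (σ i ∈ S ↔ i ∈ C)) ↔ S = C.map σ.toEmbedding := by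
    simp only [mem_univ, true_implies, Finset.ext_iff, mem_map_equiv]
    exact ⟨fun h x => by simpa using h (σ.symm x), fun h i => by simpa using h (σ i)⟩
  obtain ⟨S₀, hS₀⟩ : ∃ S₀ : {S : Finset n // #S = k}, S₀.1 = C.map σ.toEmbedding :=
    ⟨⟨C.map σ.toEmbedding, by rw [card_map, hC]⟩, rfl⟩
  simp only [prod_ite_zero, hsupp, ← hS₀, ← Subtype.ext_iff, Fintype.sum_ite_eq']

theorem det_maskBlocks_val_lt {q p : ℕ} {S : Finset (Fin (q + p))} (hS : #S = q)
    (A : Matrix (Fin (q + p)) (Fin (q + p)) R) :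
    (maskBlocks S {j | (j : ℕ) < q} A).det = (-1) ^ (∑ x ∈ S, #{y ∈ Sᶜ | y < x}) *
      (A.submatrix (S.orderEmbOfFin hS) (Fin.castAdd p)).det *
      (A.submatrix (Sᶜ.orderEmbOfFin (card_compl_of_card_eq hS)) (Fin.natAdd q)).det := by
  set B := maskBlocks S {j | (j : ℕ) < q} A
  set π := shufflePerm (p := p) hS
  have hblocks : (B.submatrix π id).submatrix finSumFinEquiv finSumFinEquiv =
      fromBlocks (A.submatrix (S.orderEmbOfFin hS) (Fin.castAdd p)) 0 0
        (A.submatrix (Sᶜ.orderEmbOfFin (card_compl_of_card_eq hS)) (Fin.natAdd q)) := by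
    ext (i | i) (j | j) <;> simp [B, π, maskBlocks]
  have hsign : ((Perm.sign π : ℤ) : R) * (Perm.sign π : ℤ) = 1 := by
    rw [← Int.cast_mul, ← Units.val_mul, Int.units_mul_self, Units.val_one, Int.cast_one]
  calc B.det = (Perm.sign π : ℤ) * ((Perm.sign π : ℤ) * B.det) := by
        rw [← mul_assoc, hsign, one_mul]
    _ = _ := by
      rw [← det_permute, ← det_submatrix_equiv_self finSumFinEquiv, hblocks, det_fromBlocks_zero₂₁,
        sign_shufflePerm]
      push_cast
      ring

theorem det_eq_sum_laplace_castAdd {q p : ℕ} (A : Matrix (Fin (q + p)) (Fin (q + p)) R) :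
    A.det = ∑ S : {S : Finset (Fin (q + p)) // #S = q},
      (-1) ^ (∑ x ∈ S.1, #{y ∈ S.1ᶜ | y < x}) *
        (A.submatrix (S.1.orderEmbOfFin S.2) (Fin.castAdd p)).det *
        (A.submatrix (S.1ᶜ.orderEmbOfFin (card_compl_of_card_eq S.2)) (Fin.natAdd q)).det := by
  rw [det_eq_sum_det_maskBlocks (k := q) (C := ({j | (j : ℕ) < q} : Finset (Fin (q + p))))
    (by simp [Fin.card_filter_val_lt]) A]
  exact sum_congr rfl fun S _ => det_maskBlocks_val_lt S.2 A

end Matrix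

theorem det_composite_eq_sum_skew_jacobiTrudi
    (R : Type*) [CommRing R] (p q : ℕ)
    (h hbar : ℤ → R)
    (lam : Fin p → ℕ)
    (mu : Fin q → ℕ) :
    -- the matrix M|L (0-indexed)
    let ML : Matrix (Fin (p + q)) (Fin (p + q)) R := fun i j =>
      if hj : (j : ℕ) < q then
        hbar (((mu ⟨q - 1 - (j : ℕ), by omega⟩ : ℕ) : ℤ) + (j : ℕ) - (i : ℕ))
      else
        h (((lam ⟨(j : ℕ) - q, by omega⟩ : ℕ) : ℤ) + (i : ℕ) - q - (((j : ℕ) - q : ℕ) : ℤ))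
    Matrix.det ML =
      ∑ γ : Fin q → Fin (p + 1),
        if (∀ a b : Fin q, a ≤ b → (γ b : ℕ) ≤ (γ a : ℕ)) then
          ((-1 : R) ^ (∑ a : Fin q, (γ a : ℕ))) *
            -- s_{μ/γ}[h̄]
            (Matrix.det (fun i j : Fin q =>
              hbar (((mu j : ℕ) : ℤ) - ((γ i : ℕ) : ℤ) - (j : ℕ) + (i : ℕ)))) *
            -- s_{λ/γᵀ}[h], with γᵀ the conjugate of γ
            (Matrix.det (fun i j : Fin p =>
              h (((lam j : ℕ) : ℤ)
                - ((Finset.univ.filter (fun a : Fin q => (i : ℕ) + 1 ≤ (γ a : ℕ))).card : ℤ)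
                - (j : ℕ) + (i : ℕ))))
        else 0 := by
  intro ML
  rw [← Matrix.det_submatrix_equiv_self (finCongr (Nat.add_comm q p)) ML,
    Matrix.det_eq_sum_laplace_castAdd, ← sum_filter]
  refine sum_bij (fun S _ => boxPartition S.2)
    (fun S _ => mem_filter.2 ⟨mem_univ _, fun a b hab => boxPartition_antitone S.2 hab⟩)
    (fun S _ T _ hST => boxPartition_injective hST)
    (fun γ hγ => ?_) (fun ⟨S, hS⟩ _ => ?_)
  · obtain ⟨S, hS⟩ := exists_boxPartition_eq fun a b hab => (mem_filter.1 hγ).2 a b hab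
    exact ⟨S, mem_univ _, hS⟩
  rw [sum_boxPartition]
  congr 2
  · rw [← Matrix.det_submatrix_equiv_self Fin.revPerm]
    congr 1
    ext b c
    have hb := boxPartition_rev_add hS b.rev
    have hc (hc' : q - 1 - (q - (c + 1)) < q) : (⟨_, hc'⟩ : Fin q) = c := Fin.ext (by simp; omega)
    simp only [Fin.rev_rev, Fin.val_rev] at hb
    simp [ML, Matrix.submatrix, hc]
    congr 1
    omega
  · ext i j
    have := card_lt_boxPartition_add hS i
    simp [ML, Matrix.submatrix]
    congr 1
    omega
end

section
/- Let V be a finite-dimensional complex vector space, and let E, F be complex vector spaces with dim E + dim F ≤ dim V. In the coordinate ring of W = Hom(E,V) × Hom(V,F), the entries of the composition g∘f (where f: E → V and g: V → F are the tautological maps) form a regular sequence of length (dim E)(dim F); equivalently, the Koszul complex on the space of generators E ⊗ F* resolves the quotient ring. -/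
/-!
Give `g_{kj}` the weight `2jk - j² + v²` and `f_{ji}` the weight `2ji`. The term `g_{kj} f_{ji}`
of the `(k, i)` entry of `g ∘ f` then has weight `v² + (k + i)² - (j - k - i)²`, so, as
`k + i < v`, each entry has the single top-weight term `g_{k,k+i} f_{k+i,i}`. These monomials
involve pairwise disjoint sets of variables, hence form a regular sequence, and regularity passes
from the top-weight forms to the entries: by regularity, a homogeneous syzygy of the top-weight
forms lifts to the entries up to terms of lower weight, so every element of the ideal has a
representation without cancellation of top-weight terms, and induction on the weight does the
rest. The ideal is proper because every entry vanishes at `0`.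
-/

open MvPolynomial

section PrefixSpan

variable {A : Type*} [CommRing A]

def prefixSpan (g : ℕ → A) (m : ℕ) : Ideal A :=
  Ideal.span (Set.range fun i : Fin m => g i)

lemma mem_prefixSpan_iff {g : ℕ → A} {m : ℕ} {p : A} :
    p ∈ prefixSpan g m ↔ ∃ c : ℕ → A, p = ∑ i ∈ Finset.range m, c i * g i := by
  classical
  rw [prefixSpan, Submodule.mem_span_range_iff_exists_fun]
  constructor
  · rintro ⟨c, rfl⟩
    refine ⟨fun i => if h : i < m then c ⟨i, h⟩ else 0, ?_⟩
    rw [← Fin.sum_univ_eq_sum_range (fun i => (if h : i < m then c ⟨i, h⟩ else 0) * g i)]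
    simp [smul_eq_mul]
  · rintro ⟨c, rfl⟩
    exact ⟨fun i => c i, by simp only [smul_eq_mul, Fin.sum_univ_eq_sum_range (fun i => c i * g i)]⟩

lemma sum_mul_mem_prefixSpan (g c : ℕ → A) (m : ℕ) :
    ∑ i ∈ Finset.range m, c i * g i ∈ prefixSpan g m :=
  mem_prefixSpan_iff.2 ⟨c, rfl⟩

def IsWeaklyRegularUpTo (g : ℕ → A) (r : ℕ) : Prop :=
  ∀ m < r, ∀ p, p * g m ∈ prefixSpan g m → p ∈ prefixSpan g m

lemma ofList_take_eq_prefixSpan (l : List A) {m : ℕ} (hm : m ≤ l.length) :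
    Ideal.ofList (l.take m) = prefixSpan (fun i => l.getD i 0) m := by
  refine congrArg Ideal.span (Set.ext fun a => ?_)
  simp only [Set.mem_ofPred_eq, Set.mem_range, List.mem_iff_getElem, List.length_take_of_le hm,
    List.getElem_take]
  exact ⟨fun ⟨i, hi, ha⟩ => ⟨⟨i, hi⟩, by rwa [List.getD_eq_getElem _ _ (by omega)]⟩,
    fun ⟨i, ha⟩ => ⟨i, i.isLt, by rwa [List.getD_eq_getElem _ _ (by omega)] at ha⟩⟩

lemma isSMulRegular_quotient_smul_top_iff {I : Ideal A} {a : A} :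
    IsSMulRegular (A ⧸ (I • ⊤ : Submodule A A)) a ↔ ∀ p, a * p ∈ I → p ∈ I := by
  rw [isSMulRegular_quotient_iff_mem_of_smul_mem, smul_eq_mul, Ideal.mul_top]
  rfl

open RingTheory.Sequence in
theorem isWeaklyRegular_iff_isWeaklyRegularUpTo (l : List A) :
    IsWeaklyRegular A l ↔ IsWeaklyRegularUpTo (fun i => l.getD i 0) l.length := by
  rw [isWeaklyRegular_iff]
  refine forall_congr' fun m => forall_congr' fun hm => ?_
  rw [isSMulRegular_quotient_smul_top_iff, ofList_take_eq_prefixSpan l hm.le,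
    ← List.getD_eq_getElem _ 0 hm]
  simp only [mul_comm]

lemma top_ne_ofList_smul_top {B : Type*} [CommRing B] [Nontrivial B] (φ : A →+* B) {l : List A}
    (hl : ∀ a ∈ l, φ a = 0) : (⊤ : Submodule A A) ≠ Ideal.ofList l • ⊤ := by
  rw [smul_eq_mul, Ideal.mul_top]
  intro htop
  have hker : Ideal.ofList l ≤ RingHom.ker φ := Ideal.span_le.2 hl
  simpa using hker (htop ▸ Submodule.mem_top : (1 : A) ∈ Ideal.ofList l)

end PrefixSpan

namespace MvPolynomial

variable {σ R : Type*} [CommRing R] {w : σ → ℤ}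

attribute [local instance] MvPolynomial.weightedGradedAlgebra in
lemma IsWeightedHomogeneous.weightedHomogeneousComponent_add_mul {F : MvPolynomial σ R} {e : ℤ}
    (hF : IsWeightedHomogeneous w F e) (p : MvPolynomial σ R) (k : ℤ) :
    weightedHomogeneousComponent w (k + e) (p * F) = weightedHomogeneousComponent w k p * F := by
  classical
  have := DirectSum.coe_decompose_mul_add_of_right_mem (weightedHomogeneousSubmodule R w) (i := k)
      (a := p) hF
  rwa [← weightedDecomposition.decompose'_apply, ← weightedDecomposition.decompose'_apply]

def WeightLT (w : σ → ℤ) (p : MvPolynomial σ R) (n : ℤ) : Prop :=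
  ∀ d : σ →₀ ℕ, n ≤ Finsupp.weight w d → coeff d p = 0

namespace WeightLT

variable {p q : MvPolynomial σ R} {a b n : ℤ}

lemma mono (hp : WeightLT w p n) (hn : n ≤ a) : WeightLT w p a :=
  fun d hd => hp d (hn.trans hd)

lemma zero : WeightLT w (0 : MvPolynomial σ R) n := fun _ _ => coeff_zero _

lemma add (hp : WeightLT w p n) (hq : WeightLT w q n) : WeightLT w (p + q) n := fun d hd => by
  rw [coeff_add, hp d hd, hq d hd, add_zero]

lemma neg (hp : WeightLT w p n) : WeightLT w (-p) n := fun d hd => by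
  rw [coeff_neg, hp d hd, neg_zero]

lemma sub (hp : WeightLT w p n) (hq : WeightLT w q n) : WeightLT w (p - q) n := fun d hd => by
  rw [coeff_sub, hp d hd, hq d hd, sub_zero]

lemma sum {ι : Type*} {s : Finset ι} {g : ι → MvPolynomial σ R}
    (h : ∀ i ∈ s, WeightLT w (g i) n) : WeightLT w (∑ i ∈ s, g i) n := fun d hd => by
  rw [coeff_sum]
  exact Finset.sum_eq_zero fun i hi => h i hi d hd

lemma mul (hp : WeightLT w p a) (hq : WeightLT w q b) : WeightLT w (p * q) (a + b - 1) := by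
  classical
  intro d hd
  rw [coeff_mul]
  refine Finset.sum_eq_zero fun x hx => ?_
  rw [Finset.HasAntidiagonal.mem_antidiagonal] at hx
  by_cases hx₁ : a ≤ Finsupp.weight w x.1
  · rw [hp _ hx₁, zero_mul]
  · have : b ≤ Finsupp.weight w x.2 := by
      have := congrArg (Finsupp.weight w) hx
      rw [map_add] at this
      omega
    rw [hq _ this, mul_zero]

lemma eq_zero (hw : ∀ s, 0 ≤ w s) (hp : WeightLT w p n) (hn : n ≤ 0) : p = 0 := by
  ext d
  exact hp d (hn.trans (Finset.sum_nonneg fun s _ => nsmul_nonneg (hw s) _))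

lemma weightedHomogeneousComponent_eq_zero (hp : WeightLT w p n) {k : ℤ} (hk : n ≤ k) :
    weightedHomogeneousComponent w k p = 0 := by
  classical
  ext d
  rw [coeff_weightedHomogeneousComponent, coeff_zero]
  split_ifs with hd
  · exact hp d (hd ▸ hk)
  · rfl

lemma sub_weightedHomogeneousComponent (hp : WeightLT w p (n + 1)) :
    WeightLT w (p - weightedHomogeneousComponent w n p) n := by
  classical
  intro d hd
  rw [coeff_sub, coeff_weightedHomogeneousComponent]
  rcases hd.eq_or_lt with hd | hd
  · rw [if_pos hd.symm, sub_self]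
  · rw [if_neg hd.ne', sub_zero]
    exact hp d hd

end WeightLT

lemma IsWeightedHomogeneous.weightLT {p : MvPolynomial σ R} {m n : ℤ}
    (hp : IsWeightedHomogeneous w p m) (hmn : m < n) : WeightLT w p n := fun d hd => by
  by_contra hc
  exact absurd (hp hc) (by omega)

lemma exists_weightLT (p : MvPolynomial σ R) : ∃ n, WeightLT w p n := by
  obtain ⟨M, hM⟩ := (p.support.image (Finsupp.weight w)).exists_le
  refine ⟨M + 1, fun d hd => notMem_support_iff.mp fun hmem => ?_⟩
  have := hM _ (Finset.mem_image_of_mem _ hmem)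
  omega

lemma mem_span_monomial_of_monomial_mul_mem {s : Set (σ →₀ ℕ)} {a : σ →₀ ℕ}
    (hs : ∀ b ∈ s, Disjoint b.support a.support) {p : MvPolynomial σ R}
    (hp : monomial a (1 : R) * p ∈ Ideal.span ((fun b => monomial b (1 : R)) '' s)) :
    p ∈ Ideal.span ((fun b => monomial b (1 : R)) '' s) := by
  rw [mem_ideal_span_monomial_image] at hp ⊢
  intro x hx
  obtain ⟨b, hb, hle⟩ := hp (a + x) (by
    rwa [mem_support_iff, coeff_monomial_mul, one_mul, ← mem_support_iff])
  refine ⟨b, hb, fun t => ?_⟩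
  by_cases ht : t ∈ b.support
  · simpa [Finsupp.notMem_support_iff.1 (Finset.disjoint_left.1 (hs b hb) ht)] using hle t
  · simp [Finsupp.notMem_support_iff.1 ht]

open RingTheory.Sequence in
theorem isWeaklyRegular_map_monomial {l : List (σ →₀ ℕ)}
    (hl : l.Pairwise fun a b => Disjoint a.support b.support) :
    IsWeaklyRegular (MvPolynomial σ R) (l.map fun a => monomial a (1 : R)) := by
  rw [isWeaklyRegular_iff]
  intro i hi
  rw [List.length_map] at hi
  rw [isSMulRegular_quotient_smul_top_iff, List.getElem_map, ← List.map_take]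
  have hdisj : ∀ b ∈ l.take i, Disjoint b.support l[i].support := by
    rw [← List.take_append_drop i l, List.pairwise_append, List.drop_eq_getElem_cons hi] at hl
    exact fun b hb => hl.2.2 b hb _ List.mem_cons_self
  have hspan : Ideal.ofList ((l.take i).map fun a => monomial a (1 : R)) =
      Ideal.span ((fun b => monomial b (1 : R)) '' {b | b ∈ l.take i}) :=
    congrArg Ideal.span (Set.ext fun _ => List.mem_map)
  rw [hspan]
  exact fun p hp => mem_span_monomial_of_monomial_mul_mem hdisj hp

lemma weightedHomogeneousComponent_mul_of_weightLT_sub {f F h : MvPolynomial σ R} {d n : ℤ}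
    (hF : IsWeightedHomogeneous w F d) (htail : WeightLT w (f - F) d)
    (hh : WeightLT w h (n + 1 - d)) :
    weightedHomogeneousComponent w n (h * f) = weightedHomogeneousComponent w (n - d) h * F := by
  have hlow : weightedHomogeneousComponent w n (h * (f - F)) = 0 :=
    (hh.mul htail).weightedHomogeneousComponent_eq_zero (by omega)
  rw [← hF.weightedHomogeneousComponent_add_mul, sub_add_cancel, ← sub_eq_zero, ← map_sub,
    ← mul_sub, hlow]

variable {f F : ℕ → MvPolynomial σ R} {d : ℕ → ℤ}

lemma weightedHomogeneousComponent_sum_mul_of_weightLT_sub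
    (hF : ∀ i, IsWeightedHomogeneous w (F i) (d i)) (htail : ∀ i, WeightLT w (f i - F i) (d i))
    {h : ℕ → MvPolynomial σ R} {m : ℕ} {n : ℤ} (hh : ∀ i < m, WeightLT w (h i) (n + 1 - d i)) :
    weightedHomogeneousComponent w n (∑ i ∈ Finset.range m, h i * f i) =
      ∑ i ∈ Finset.range m, weightedHomogeneousComponent w (n - d i) (h i) * F i := by
  rw [map_sum]
  exact Finset.sum_congr rfl fun i hi =>
    weightedHomogeneousComponent_mul_of_weightLT_sub (hF i) (htail i)
      (hh i (Finset.mem_range.1 hi))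

lemma exists_isWeightedHomogeneous_of_mem_prefixSpan
    (hF : ∀ i, IsWeightedHomogeneous w (F i) (d i)) {P : MvPolynomial σ R} {D : ℤ} {m : ℕ}
    (hP : IsWeightedHomogeneous w P D) (hmem : P ∈ prefixSpan F m) :
    ∃ b : ℕ → MvPolynomial σ R, P = ∑ i ∈ Finset.range m, b i * F i ∧
      ∀ i, IsWeightedHomogeneous w (b i) (D - d i) := by
  obtain ⟨c, hc⟩ := mem_prefixSpan_iff.1 hmem
  refine ⟨fun i => weightedHomogeneousComponent w (D - d i) (c i), ?_,
    fun i => weightedHomogeneousComponent_isWeightedHomogeneous _ _⟩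
  rw [← hP.weightedHomogeneousComponent_same, hc, map_sum]
  refine Finset.sum_congr rfl fun i _ => ?_
  rw [← (hF i).weightedHomogeneousComponent_add_mul, sub_add_cancel]

section Regular

variable (hF : ∀ i, IsWeightedHomogeneous w (F i) (d i))
  (htail : ∀ i, WeightLT w (f i - F i) (d i)) {r : ℕ} (hreg : IsWeaklyRegularUpTo F r)
include hF htail hreg

/- Induction on `m`: regularity of `F` gives `Hₘ = ∑ bᵢ Fᵢ`, so `Hᵢ + bᵢ Fₘ` is a shorter
syzygy, and replacing `Fᵢ fₘ` by `fᵢ fₘ` costs only the lower-weight `∑ bᵢ (fᵢ - Fᵢ) fₘ`. -/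
theorem exists_weightLT_of_sum_mul_eq_zero {m : ℕ} (hm : m ≤ r) {D : ℤ}
    {H : ℕ → MvPolynomial σ R} (hH : ∀ i, IsWeightedHomogeneous w (H i) (D - d i))
    (hsyz : ∑ i ∈ Finset.range m, H i * F i = 0) :
    ∃ k : ℕ → MvPolynomial σ R, ∑ i ∈ Finset.range m, H i * f i =
      ∑ i ∈ Finset.range m, k i * f i ∧ ∀ i, WeightLT w (k i) (D - d i) := by
  induction m generalizing H with
  | zero => exact ⟨0, by simp, fun _ => WeightLT.zero⟩
  | succ m ih =>
    rw [Finset.sum_range_succ] at hsyz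
    have hmem : H m * F m ∈ prefixSpan F m := by
      rw [eq_neg_of_add_eq_zero_right hsyz]
      exact neg_mem (sum_mul_mem_prefixSpan _ _ _)
    obtain ⟨b, hb, hbhom⟩ :=
      exists_isWeightedHomogeneous_of_mem_prefixSpan hF (hH m) (hreg m hm _ hmem)
    have hH' : ∀ i, IsWeightedHomogeneous w (H i + b i * F m) (D - d i) := fun i => by
      have := (hbhom i).mul (hF m)
      rw [sub_right_comm, sub_add_cancel] at this
      exact (hH i).add this
    have hsyz' : ∑ i ∈ Finset.range m, (H i + b i * F m) * F i = 0 := by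
      rw [← hsyz, hb, Finset.sum_mul, ← Finset.sum_add_distrib]
      exact Finset.sum_congr rfl fun i _ => by ring
    obtain ⟨k, hk, hkw⟩ := ih (by omega) hH' hsyz'
    set k' := Function.update (fun i => k i + b i * (f m - F m)) m
      (-∑ i ∈ Finset.range m, b i * (f i - F i))
    have hk'm : k' m = -∑ i ∈ Finset.range m, b i * (f i - F i) := Function.update_self ..
    have hk'i (i : ℕ) (hi : i ≠ m) : k' i = k i + b i * (f m - F m) := Function.update_of_ne hi ..
    refine ⟨k', ?_, fun i => ?_⟩
    · have hk' : ∑ i ∈ Finset.range m, k' i * f i =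
          ∑ i ∈ Finset.range m, (k i + b i * (f m - F m)) * f i :=
        Finset.sum_congr rfl fun i hi => by rw [hk'i i (Finset.mem_range.1 hi).ne]
      rw [Finset.sum_range_succ, Finset.sum_range_succ, hk'm, hk', hb, ← sub_eq_zero]
      calc _ = ∑ i ∈ Finset.range m, ((H i + b i * F m) * f i - k i * f i) := by
            simp only [Finset.sum_mul, neg_mul, ← Finset.sum_neg_distrib, ← Finset.sum_add_distrib,
              ← Finset.sum_sub_distrib]
            exact Finset.sum_congr rfl fun i _ => by ring
        _ = 0 := by rw [Finset.sum_sub_distrib, hk, sub_self]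
    · rcases eq_or_ne i m with rfl | hi
      · rw [hk'm]
        refine (WeightLT.sum fun j _ => ?_).neg
        exact (((hbhom j).weightLT (lt_add_one _)).mul (htail j)).mono (by omega)
      · rw [hk'i i hi]
        exact (hkw i).add ((((hbhom i).weightLT (lt_add_one _)).mul (htail m)).mono (by omega))

theorem exists_repr_weightLT_of_repr_weightLT_succ {m : ℕ} (hm : m ≤ r) {p : MvPolynomial σ R}
    {D E : ℤ} (hp : WeightLT w p D) (hDE : D ≤ E) {h : ℕ → MvPolynomial σ R}
    (hrepr : p = ∑ i ∈ Finset.range m, h i * f i)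
    (hh : ∀ i < m, WeightLT w (h i) (E + 1 - d i)) :
    ∃ h' : ℕ → MvPolynomial σ R, p = ∑ i ∈ Finset.range m, h' i * f i ∧
      ∀ i < m, WeightLT w (h' i) (E - d i) := by
  have hsyz :
      ∑ i ∈ Finset.range m, weightedHomogeneousComponent w (E - d i) (h i) * F i = 0 := by
    rw [← weightedHomogeneousComponent_sum_mul_of_weightLT_sub hF htail hh, ← hrepr]
    exact hp.weightedHomogeneousComponent_eq_zero hDE
  obtain ⟨k, hk, hkw⟩ := exists_weightLT_of_sum_mul_eq_zero hF htail hreg hm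
    (fun i => weightedHomogeneousComponent_isWeightedHomogeneous _ _) hsyz
  refine ⟨fun i => h i - weightedHomogeneousComponent w (E - d i) (h i) + k i, ?_,
    fun i hi => ?_⟩
  · simp only [add_mul, sub_mul, Finset.sum_add_distrib, Finset.sum_sub_distrib, ← hk, ← hrepr,
      sub_add_cancel]
  · refine WeightLT.add ?_ (hkw i)
    exact WeightLT.sub_weightedHomogeneousComponent ((hh i hi).mono (by omega))

theorem exists_repr_weightLT {m : ℕ} (hm : m ≤ r) {p : MvPolynomial σ R} {D : ℤ}
    (hmem : p ∈ prefixSpan f m) (hp : WeightLT w p D) :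
    ∃ h : ℕ → MvPolynomial σ R, p = ∑ i ∈ Finset.range m, h i * f i ∧
      ∀ i < m, WeightLT w (h i) (D - d i) := by
  obtain ⟨h, hrepr⟩ := mem_prefixSpan_iff.1 hmem
  choose n hn using fun i => exists_weightLT (w := w) (h i)
  obtain ⟨E, hE⟩ := ((Finset.range m).image fun i => n i + d i).exists_le
  suffices key : ∀ E, D ≤ E → ∀ h : ℕ → MvPolynomial σ R,
      p = ∑ i ∈ Finset.range m, h i * f i → (∀ i < m, WeightLT w (h i) (E - d i)) →
      ∃ h' : ℕ → MvPolynomial σ R, p = ∑ i ∈ Finset.range m, h' i * f i ∧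
        ∀ i < m, WeightLT w (h' i) (D - d i) by
    refine key (max D E) (le_max_left _ _) h hrepr fun i hi => (hn i).mono ?_
    have := hE _ (Finset.mem_image_of_mem _ (Finset.mem_range.2 hi))
    have := le_max_right D E
    omega
  intro E hDE
  induction E, hDE using Int.leInduction with
  | base => exact fun h hrepr hh => ⟨h, hrepr, hh⟩
  | succ E hDE ih =>
    intro h hrepr hh
    obtain ⟨h', hrepr', hh'⟩ :=
      exists_repr_weightLT_of_repr_weightLT_succ hF htail hreg hm hp hDE hrepr hh
    exact ih h' hrepr' hh'

theorem exists_sub_sum_mul_weightLT {m : ℕ} (hm : m < r) {q : MvPolynomial σ R} {n : ℤ}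
    (hq : WeightLT w q (n + 1)) (hmem : q * f m ∈ prefixSpan f m) :
    ∃ b : ℕ → MvPolynomial σ R, WeightLT w (q - ∑ i ∈ Finset.range m, b i * f i) n := by
  have hf : WeightLT w (f m) (d m + 1) := by
    simpa using ((htail m).mono (by omega)).add ((hF m).weightLT (lt_add_one _))
  have hqf : WeightLT w (q * f m) (n + d m + 1) := (hq.mul hf).mono (by omega)
  obtain ⟨h, hrepr, hh⟩ := exists_repr_weightLT hF htail hreg hm.le hmem hqf
  have htop : weightedHomogeneousComponent w n q * F m ∈ prefixSpan F m := by
    have hlead := weightedHomogeneousComponent_mul_of_weightLT_sub (n := n + d m) (hF m) (htail m)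
      (hq.mono (by omega))
    rw [add_sub_cancel_right] at hlead
    rw [← hlead, hrepr, weightedHomogeneousComponent_sum_mul_of_weightLT_sub hF htail
      fun i hi => (hh i hi).mono (by omega)]
    exact sum_mul_mem_prefixSpan _ _ _
  obtain ⟨b, hb, hbhom⟩ := exists_isWeightedHomogeneous_of_mem_prefixSpan hF
    (weightedHomogeneousComponent_isWeightedHomogeneous n q) (hreg m hm _ htop)
  refine ⟨b, ?_⟩
  have hsplit : q - ∑ i ∈ Finset.range m, b i * f i =
      (q - weightedHomogeneousComponent w n q) - ∑ i ∈ Finset.range m, b i * (f i - F i) := by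
    simp only [hb, mul_sub, Finset.sum_sub_distrib]
    ring
  rw [hsplit]
  refine hq.sub_weightedHomogeneousComponent.sub (WeightLT.sum fun i _ => ?_)
  exact (((hbhom i).weightLT (lt_add_one _)).mul (htail i)).mono (by omega)

theorem IsWeaklyRegularUpTo.of_leadingForms (hw : ∀ s, 0 ≤ w s) : IsWeaklyRegularUpTo f r := by
  intro m hm q hq
  obtain ⟨N, hN⟩ := exists_weightLT (w := w) q
  suffices key : ∀ n : ℕ, ∀ q, WeightLT w q n → q * f m ∈ prefixSpan f m → q ∈ prefixSpan f m from
    key N.toNat q (hN.mono (Int.self_le_toNat N)) hq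
  intro n
  induction n with
  | zero => exact fun q hq _ => by rw [hq.eq_zero hw (by simp)]; exact zero_mem _
  | succ n ih =>
    intro q hq hmem
    obtain ⟨b, hb⟩ := exists_sub_sum_mul_weightLT hF htail hreg hm (by simpa using hq) hmem
    have hsum := sum_mul_mem_prefixSpan f b m
    have hmem' := ih _ hb (by rw [sub_mul]; exact sub_mem hmem (Ideal.mul_mem_right _ _ hsum))
    simpa using add_mem hmem' hsum

end Regular

end MvPolynomial

open RingTheory.Sequence in
theorem RingTheory.Sequence.IsWeaklyRegular.of_map_leadingForms {σ R ι : Type*} [CommRing R]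
    {w : σ → ℤ} (hw : ∀ s, 0 ≤ w s) {L : List ι} {f F : ι → MvPolynomial σ R} {d : ι → ℤ}
    (hF : ∀ a, IsWeightedHomogeneous w (F a) (d a)) (htail : ∀ a, WeightLT w (f a - F a) (d a))
    (hreg : IsWeaklyRegular (MvPolynomial σ R) (L.map F)) :
    IsWeaklyRegular (MvPolynomial σ R) (L.map f) := by
  have hget (g : ι → MvPolynomial σ R) :
      (fun n => (L.map g).getD n 0) = fun n => (L[n]?.map g).getD 0 :=
    funext fun n => by simp [List.getD_eq_getElem?_getD]
  rw [isWeaklyRegular_iff_isWeaklyRegularUpTo, List.length_map, hget] at hreg ⊢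
  refine hreg.of_leadingForms (d := fun n => (L[n]?.map d).getD 0) ?_ ?_ hw
  all_goals intro n; cases L[n]? <;> simp [hF, htail, isWeightedHomogeneous_zero, WeightLT.zero]

noncomputable section Composition

variable {R : Type*} [CommRing R] {v e f : ℕ}

def compositionWeight (v e f : ℕ) : (Fin v × Fin e) ⊕ (Fin f × Fin v) → ℤ
  | .inl (j, i) => 2 * j * i
  | .inr (k, j) => 2 * j * k - j ^ 2 + v ^ 2

lemma compositionWeight_nonneg (s : (Fin v × Fin e) ⊕ (Fin f × Fin v)) :
    0 ≤ compositionWeight v e f s := by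
  rcases s with ⟨j, i⟩ | ⟨k, j⟩
  · simp only [compositionWeight]
    positivity
  · have := j.isLt
    simp only [compositionWeight]
    nlinarith

def compositionEntry (v : ℕ) (k : Fin f) (i : Fin e) :
    MvPolynomial ((Fin v × Fin e) ⊕ (Fin f × Fin v)) R :=
  ∑ j, X (.inr (k, j)) * X (.inl (j, i))

def termExponent (k : Fin f) (i : Fin e) (j : Fin v) : (Fin v × Fin e) ⊕ (Fin f × Fin v) →₀ ℕ :=
  Finsupp.single (.inr (k, j)) 1 + Finsupp.single (.inl (j, i)) 1

lemma weight_termExponent (k : Fin f) (i : Fin e) (j : Fin v) :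
    Finsupp.weight (compositionWeight v e f) (termExponent k i j) =
      v ^ 2 + (k + i : ℤ) ^ 2 - (j - (k + i) : ℤ) ^ 2 := by
  simp only [termExponent, map_add, Finsupp.weight_single, compositionWeight, one_smul]
  ring

lemma compositionEntry_eq_sum_monomial (k : Fin f) (i : Fin e) :
    compositionEntry v k i = ∑ j, monomial (termExponent k i j) (1 : R) :=
  Finset.sum_congr rfl fun _ _ => by rw [X, X, monomial_mul, one_mul, termExponent]

def leadingExponent (h : e + f ≤ v) (a : Fin f × Fin e) :
    (Fin v × Fin e) ⊕ (Fin f × Fin v) →₀ ℕ :=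
  termExponent a.1 a.2 ⟨a.1 + a.2, by omega⟩

lemma isWeightedHomogeneous_monomial_leadingExponent (h : e + f ≤ v) (a : Fin f × Fin e) :
    IsWeightedHomogeneous (compositionWeight v e f) (monomial (leadingExponent h a) (1 : R))
      (v ^ 2 + (a.1 + a.2 : ℤ) ^ 2) :=
  isWeightedHomogeneous_monomial _ _ _ (by simp [leadingExponent, weight_termExponent])

lemma weightLT_compositionEntry_sub (h : e + f ≤ v) (a : Fin f × Fin e) :
    WeightLT (compositionWeight v e f)
      (compositionEntry v a.1 a.2 - monomial (leadingExponent h a) (1 : R))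
      (v ^ 2 + (a.1 + a.2 : ℤ) ^ 2) := by
  classical
  rw [compositionEntry_eq_sum_monomial, leadingExponent,
    ← Finset.sum_erase_eq_sub (Finset.mem_univ _)]
  refine WeightLT.sum fun j hj => (isWeightedHomogeneous_monomial _ _ _ rfl).weightLT ?_
  have hj : (j : ℤ) ≠ a.1 + a.2 := fun hj' =>
    Finset.ne_of_mem_erase hj (Fin.ext (by dsimp only; omega))
  have : 0 < ((j : ℤ) - (a.1 + a.2)) ^ 2 := by positivity
  rw [weight_termExponent]
  omega

lemma support_termExponent_subset (k : Fin f) (i : Fin e) (j : Fin v) :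
    (termExponent k i j).support ⊆ {.inr (k, j), .inl (j, i)} := by
  classical
  exact Finsupp.support_add.trans
    (Finset.union_subset_union Finsupp.support_single_subset Finsupp.support_single_subset)

lemma disjoint_support_leadingExponent (h : e + f ≤ v) {a b : Fin f × Fin e} (hab : a ≠ b) :
    Disjoint (leadingExponent h a).support (leadingExponent h b).support := by
  rw [ne_eq, Prod.ext_iff, Fin.ext_iff, Fin.ext_iff] at hab
  refine Finset.disjoint_of_subset_left (support_termExponent_subset _ _ _)
    (Finset.disjoint_of_subset_right (support_termExponent_subset _ _ _) ?_)
  simp [Fin.ext_iff]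
  omega

lemma constantCoeff_compositionEntry (k : Fin f) (i : Fin e) :
    constantCoeff (compositionEntry v k i : MvPolynomial _ R) = 0 := by
  simp [compositionEntry]

open RingTheory.Sequence in
theorem isWeaklyRegular_map_compositionEntry (h : e + f ≤ v) :
    IsWeaklyRegular (MvPolynomial ((Fin v × Fin e) ⊕ (Fin f × Fin v)) R)
      ((Finset.univ : Finset (Fin f × Fin e)).toList.map
        fun a => compositionEntry (R := R) v a.1 a.2) := by
  have hleading := isWeaklyRegular_map_monomial (R := R) (List.pairwise_map.2
    ((Finset.nodup_toList (Finset.univ : Finset (Fin f × Fin e))).imp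
      (disjoint_support_leadingExponent h)))
  rw [List.map_map] at hleading
  exact hleading.of_map_leadingForms compositionWeight_nonneg
    (isWeightedHomogeneous_monomial_leadingExponent h) (weightLT_compositionEntry_sub h)

end Composition

open MvPolynomial in
theorem entries_of_composition_regular_sequence
    (e v f : ℕ) (h : e + f ≤ v) :
    -- coordinate ring of Hom(E,V) × Hom(V,F): variables are the matrix entries of
    -- f : E → V (type `Fin v × Fin e`) and g : V → F (type `Fin f × Fin v`)
    let A := MvPolynomial ((Fin v × Fin e) ⊕ (Fin f × Fin v)) ℂ
    -- the entries of g ∘ f : E → F, spanning a copy of E ⊗ F* inside A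
    let entry : Fin f × Fin e → A := fun ki =>
      ∑ j : Fin v, X (Sum.inr (ki.1, j)) * X (Sum.inl (j, ki.2))
    RingTheory.Sequence.IsRegular A
      ((Finset.univ : Finset (Fin f × Fin e)).toList.map entry)
    ∧ ((Finset.univ : Finset (Fin f × Fin e)).toList.map entry).length = e * f := by
  intro A entry
  refine ⟨⟨isWeaklyRegular_map_compositionEntry (R := ℂ) h,
    top_ne_ofList_smul_top constantCoeff ?_⟩, ?_⟩
  · intro p hp
    obtain ⟨a, -, rfl⟩ := List.mem_map.1 hp
    exact constantCoeff_compositionEntry a.1 a.2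
  · simp [Nat.mul_comm]
end

section
/- Let λ and μ be partitions and δ ≥ ℓ(λ) + ℓ(μ) an integer. Define the sets I_∧ = {λ_i - i + 1 : i ≥ 1} and I_∨ = {i - δ - μ_i : i ≥ 1} (treating λ_i = 0 for i > ℓ(λ) and μ_i = 0 for i > ℓ(μ)). Then every element of L = I_∧ \ I_∨ is strictly less than every element of M = I_∨ \ I_∧, i.e., max(L) < min(M). -/
/-!
Since `λᵢ = 0` for `i > r`, the set `I_∧` contains every integer `≤ -r`, and since `μᵢ = 0`
for `i > s`, the set `I_∨` contains every integer `≥ s - δ + 1`. Hence `L ⊆ (-∞, s - δ]` and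
`M ⊆ [1 - r, ∞)`, and `s - δ ≤ -r` because `δ ≥ r + s`.
-/

theorem exists_eq_sub_add_one_of_le_neg {lam : ℕ → ℕ} {r : ℕ} (hr : ∀ i : ℕ, r < i → lam i = 0)
    {z : ℤ} (hz : z ≤ -(r : ℤ)) : ∃ i : ℕ, 1 ≤ i ∧ z = (lam i : ℤ) - i + 1 := by
  refine ⟨(1 - z).toNat, by omega, ?_⟩
  rw [hr _ (by omega), Int.toNat_of_nonneg (by omega)]
  ring

theorem exists_eq_sub_sub_of_le {mu : ℕ → ℕ} {s : ℕ} (hs : ∀ i : ℕ, s < i → mu i = 0)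
    {δ : ℕ} {z : ℤ} (hz : (s : ℤ) + 1 - δ ≤ z) : ∃ i : ℕ, 1 ≤ i ∧ z = (i : ℤ) - δ - mu i := by
  refine ⟨(z + δ).toNat, by omega, ?_⟩
  rw [hs _ (by omega), Int.toNat_of_nonneg (by omega)]
  ring

theorem max_lt_min_of_weight_diagram_general
    (lam mu : ℕ → ℕ)
    (r s : ℕ)
    (hr : ∀ i : ℕ, r < i → lam i = 0)
    (hs : ∀ i : ℕ, s < i → mu i = 0)
    (δ : ℕ) (hδ : r + s ≤ δ) :
    let Iw : Set ℤ := { z | ∃ i : ℕ, 1 ≤ i ∧ z = (lam i : ℤ) - i + 1 }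
    let Iv : Set ℤ := { z | ∃ i : ℕ, 1 ≤ i ∧ z = (i : ℤ) - δ - mu i }
    ∀ x ∈ Iw \ Iv, ∀ y ∈ Iv \ Iw, x < y := by
  intro Iw Iv x ⟨_, hx_notMem⟩ y ⟨_, hy_notMem⟩
  have hx : x ≤ (s : ℤ) - δ := by
    by_contra! h
    exact hx_notMem (exists_eq_sub_sub_of_le hs (by omega))
  have hy : -(r : ℤ) < y := by
    by_contra! h
    exact hy_notMem (exists_eq_sub_add_one_of_le_neg hr h)
  omega

theorem max_lt_min_of_weight_diagram
    (lam mu : ℕ → ℕ)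
    (hlam : ∀ i j : ℕ, 1 ≤ i → i ≤ j → lam j ≤ lam i)
    (hmu : ∀ i j : ℕ, 1 ≤ i → i ≤ j → mu j ≤ mu i)
    (r s : ℕ)
    (hr : ∀ i : ℕ, r < i → lam i = 0)
    (hs : ∀ i : ℕ, s < i → mu i = 0)
    (δ : ℕ) (hδ : r + s ≤ δ) :
    let Iw : Set ℤ := { z | ∃ i : ℕ, 1 ≤ i ∧ z = (lam i : ℤ) - i + 1 }
    let Iv : Set ℤ := { z | ∃ i : ℕ, 1 ≤ i ∧ z = (i : ℤ) - δ - mu i }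
    ∀ x ∈ Iw \ Iv, ∀ y ∈ Iv \ Iw, x < y :=
  max_lt_min_of_weight_diagram_general lam mu r s hr hs δ hδ
end
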